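/- arXiv:1707.01200 — 8 statements merged into one kernel-verified Lean document; each statement's English description precedes it below -/
import Mathlib

section
/- For all integers B ≥ a ≥ 0, the sum over j from a to B of q^{2j} times the Gaussian binomial coefficient [j choose a]_q equals q^{2a} times ([B+2 choose a+2]_q minus q times [B+1 choose a+2]_q). -/
/-!
Put `F n = [n+1 choose a+2]_q - q [n choose a+2]_q`, so that `F 0 = 0`. Three applications of the
q-Pascal rule `[k+d+1 choose k+1]_q = [k+d choose k+1]_q + q^d [k+d choose k]_q` give
`q^(2a) (F (j+1) - F j) = q^(2j) [j choose a]_q` for every `j`, so the sum telescopes (the terms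
with `j < a` vanish).
-/

open Finset

/-- The q-Pochhammer `(q)_N = (1-q)(1-q^2)⋯(1-q^N)` as a rational function in `q`. -/
noncomputable def qPoch (N : ℕ) : RatFunc ℚ :=
  ∏ j ∈ Finset.range N, (1 - RatFunc.X ^ (j + 1))

/-- The Gaussian binomial coefficient `[M choose N]_q = (q)_M / ((q)_N (q)_{M-N})`,
with the convention that it is `0` when `N > M`. -/
noncomputable def gaussBinom (M N : ℕ) : RatFunc ℚ :=
  if N ≤ M then qPoch M / (qPoch N * qPoch (M - N)) else 0

open RatFunc

lemma one_sub_X_pow_succ_ne_zero (m : ℕ) : (1 - X ^ (m + 1) : RatFunc ℚ) ≠ 0 := by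
  refine sub_ne_zero.mpr fun h => ?_
  have : (Polynomial.X ^ (m + 1) : Polynomial ℚ) = 1 :=
    RatFunc.algebraMap_injective ℚ (by simpa [algebraMap_X] using h.symm)
  simpa using congrArg Polynomial.natDegree this

lemma qPoch_ne_zero (N : ℕ) : qPoch N ≠ 0 :=
  prod_ne_zero_iff.mpr fun j _ => one_sub_X_pow_succ_ne_zero j

lemma qPoch_zero : qPoch 0 = 1 :=
  prod_range_zero _

lemma qPoch_succ (N : ℕ) : qPoch (N + 1) = qPoch N * (1 - X ^ (N + 1)) :=
  prod_range_succ _ _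

lemma gaussBinom_of_le {M N : ℕ} (h : N ≤ M) :
    gaussBinom M N = qPoch M / (qPoch N * qPoch (M - N)) :=
  if_pos h

lemma gaussBinom_self (n : ℕ) : gaussBinom n n = 1 := by
  rw [gaussBinom_of_le le_rfl, Nat.sub_self, qPoch_zero, mul_one, div_self (qPoch_ne_zero n)]

lemma gaussBinom_of_lt {M N : ℕ} (h : M < N) : gaussBinom M N = 0 :=
  if_neg (Nat.not_le.mpr h)

lemma gaussBinom_add_succ_succ (k d : ℕ) :
    gaussBinom (k + d + 1) (k + 1)
      = gaussBinom (k + d) (k + 1) + X ^ d * gaussBinom (k + d) k := by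
  cases d with
  | zero => simp [gaussBinom_self, gaussBinom_of_lt]
  | succ e =>
    rw [gaussBinom_of_le (by omega), gaussBinom_of_le (by omega), gaussBinom_of_le (by omega),
      show k + (e + 1) + 1 - (k + 1) = e + 1 by omega, show k + (e + 1) - (k + 1) = e by omega,
      Nat.add_sub_cancel_left, ← add_assoc, qPoch_succ (k + e + 1), qPoch_succ e, qPoch_succ k]
    have := qPoch_ne_zero k
    have := qPoch_ne_zero e
    have := one_sub_X_pow_succ_ne_zero e
    have := one_sub_X_pow_succ_ne_zero k
    field_simp
    ring

lemma X_pow_two_mul_gaussBinom_eq_sub (a n : ℕ) :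
    X ^ (2 * n) * gaussBinom n a
      = X ^ (2 * a) * ((gaussBinom (n + 2) (a + 2) - X * gaussBinom (n + 1) (a + 2))
          - (gaussBinom (n + 1) (a + 2) - X * gaussBinom n (a + 2))) := by
  rcases lt_or_ge n a with hn | hn
  · simp [gaussBinom_of_lt, hn, show n < a + 2 by omega, show n + 1 < a + 2 by omega,
      show n + 2 < a + 2 by omega]
  obtain ⟨d, rfl⟩ := Nat.exists_eq_add_of_le hn
  cases d with
  | zero => simp [gaussBinom_self, gaussBinom_of_lt]
  | succ e =>
    have h1 := gaussBinom_add_succ_succ (a + 1) (e + 1)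
    have h2 := gaussBinom_add_succ_succ (a + 1) e
    have h3 := gaussBinom_add_succ_succ a (e + 1)
    simp only [show a + 1 + (e + 1) = a + (e + 1) + 1 by ring, show a + 1 + e = a + (e + 1) by ring,
      show a + 1 + 1 = a + 2 by ring] at h1 h2 h3
    rw [h1, h2, h3]
    ring

lemma sum_Icc_eq_sum_range_of_eq_zero {M : Type*} [AddCommMonoid M] {f : ℕ → M} {a : ℕ}
    (hf : ∀ j < a, f j = 0) (B : ℕ) : ∑ j ∈ Icc a B, f j = ∑ j ∈ range (B + 1), f j := by
  refine sum_subset (fun j hj => ?_) fun j hjB hj => hf j ?_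
  · simp only [mem_Icc, mem_range] at hj ⊢; omega
  · simp only [mem_Icc, mem_range] at hjB hj; omega

theorem sum_q_sq_pow_gaussBinom_general (a B : ℕ) :
    ∑ j ∈ Finset.Icc a B, RatFunc.X ^ (2 * j) * gaussBinom j a
      = RatFunc.X ^ (2 * a) *
        (gaussBinom (B + 2) (a + 2) - RatFunc.X * gaussBinom (B + 1) (a + 2)) := by
  rw [sum_Icc_eq_sum_range_of_eq_zero (fun j hj => by rw [gaussBinom_of_lt hj, mul_zero]),
    sum_congr rfl fun n _ => X_pow_two_mul_gaussBinom_eq_sub a n, ← mul_sum,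
    sum_range_sub (fun n => gaussBinom (n + 1) (a + 2) - X * gaussBinom n (a + 2))]
  simp [gaussBinom_of_lt]

theorem sum_q_sq_pow_gaussBinom (a B : ℕ) (h : a ≤ B) :
    ∑ j ∈ Finset.Icc a B, RatFunc.X ^ (2 * j) * gaussBinom j a
      = RatFunc.X ^ (2 * a) *
        (gaussBinom (B + 2) (a + 2) - RatFunc.X * gaussBinom (B + 1) (a + 2)) :=
  sum_q_sq_pow_gaussBinom_general a B
end

section
/- For n ≥ 2k ≥ 2, the generating function by major index of standard Young tableaux of shape (n-k,k) with exactly one descent equals q^k + q^{k+1} + ... + q^{n-k}. -/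
open Finset Polynomial
open scoped Classical

/-- A standard Young tableau of two-rowed shape `(n-b, b)` is encoded by the set `S`
of entries of its second row: `S ⊆ {1,…,n}`, `|S| = b`, and for every `m` at most
half of `{1,…,m}` lies in `S` (the ballot condition, which makes columns increase). -/
noncomputable def sytSet (n b : ℕ) : Finset (Finset ℕ) :=
  (Finset.Icc 1 n).powerset.filter
    (fun S => S.card = b ∧ ∀ m ∈ Finset.Icc 1 n, 2 * (S ∩ Finset.Icc 1 m).card ≤ m)

/-- The descent set of a two-rowed SYT with second row `S`: those `i` with `i+1`
in the second row and `i` in the first row (i.e. `i+1` strictly lower than `i`). -/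
def tabDes (n : ℕ) (S : Finset ℕ) : Finset ℕ :=
  (Finset.Icc 1 n).filter (fun i => i + 1 ∈ S ∧ i ∉ S)

def tabMaj (n : ℕ) (S : Finset ℕ) : ℕ := (tabDes n S).sum id

/-- `sytMajGF a b i` is the generating function `∑ q^{maj T}` over standard Young
tableaux `T` of shape `(a, b)` with exactly `i` descents. -/
noncomputable def sytMajGF (a b i : ℕ) : Polynomial ℚ :=
  (((sytSet (a + b) b).filter (fun S => (tabDes (a + b) S).card = i)).sum
    (fun S => Polynomial.X ^ (tabMaj (a + b) S)))

/-!
If the second row `S` of a two-rowed tableau contains `s` but not `s - 1`, then `s - 1` is a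
descent (`s ≥ 2`, since the ballot condition keeps `1` out of `S`). So a tableau with a single
descent `d` has `S = {d+1, …, d+k}`, and the ballot condition at `m = d + k` says exactly
`k ≤ d`. Thus the tableaux of shape `(a, k)` with one descent are indexed by their descent
`d ∈ [k, a]`, whose major index is `d`.
-/

lemma tabDes_Icc {n j k : ℕ} (hj : 1 ≤ j) (hjn : j ≤ n) (hk : 1 ≤ k) :
    tabDes n (Icc (j + 1) (j + k)) = {j} := by
  ext i
  simp only [tabDes, mem_filter, mem_Icc, mem_singleton]
  omega

lemma Icc_mem_sytSet_iff {n j k : ℕ} (hk : 1 ≤ k) :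
    Icc (j + 1) (j + k) ∈ sytSet n k ↔ k ≤ j ∧ j + k ≤ n := by
  have hinter : ∀ m, Icc (j + 1) (j + k) ∩ Icc 1 m = Icc (j + 1) (min (j + k) m) := by
    intro m
    ext x
    simp only [mem_inter, mem_Icc, le_min_iff]
    omega
  simp only [sytSet, mem_filter, mem_powerset, Icc_subset_Icc_iff (by omega : j + 1 ≤ j + k),
    Nat.card_Icc, hinter, mem_Icc]
  constructor
  · rintro ⟨⟨-, hjkn⟩, -, hballot⟩
    have := hballot (j + k) ⟨by omega, hjkn⟩
    omega
  · intro ⟨hkj, hjkn⟩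
    exact ⟨⟨by omega, hjkn⟩, by omega, fun m _ => by omega⟩

lemma two_le_of_mem_sytSet {n b s : ℕ} {S : Finset ℕ} (hS : S ∈ sytSet n b) (hs : s ∈ S) :
    2 ≤ s := by
  simp only [sytSet, mem_filter, mem_powerset] at hS
  obtain ⟨hsub, -, hballot⟩ := hS
  have hsn := mem_Icc.mp (hsub hs)
  by_contra! hs2
  obtain rfl : s = 1 := by omega
  have hone := hballot 1 (mem_Icc.mpr ⟨le_rfl, hsn.2⟩)
  have : 0 < (S ∩ Icc 1 1).card := card_pos.mpr ⟨1, by simp [hs]⟩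
  omega

lemma Icc_subset_of_forall_descent_eq {S : Finset ℕ} {d : ℕ} (htwo : ∀ s ∈ S, 2 ≤ s)
    (hdes : ∀ i, i + 1 ∈ S → i ∉ S → i = d) : ∀ s ∈ S, d < s ∧ Icc (d + 1) s ⊆ S := by
  intro s
  induction s using Nat.strong_induction_on with
  | _ s ih =>
    intro hs
    have hs2 := htwo s hs
    by_cases hpred : s - 1 ∈ S
    · obtain ⟨hds, hsub⟩ := ih (s - 1) (by omega) hpred
      refine ⟨by omega, fun x hx => ?_⟩
      rcases (mem_Icc.mp hx).2.eq_or_lt with rfl | hlt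
      · exact hs
      · exact hsub (mem_Icc.mpr ⟨(mem_Icc.mp hx).1, by omega⟩)
    · have hd : s - 1 = d := hdes (s - 1) (by rwa [Nat.sub_add_cancel (by omega)]) hpred
      refine ⟨by omega, fun x hx => ?_⟩
      obtain rfl : x = s := by rw [mem_Icc] at hx; omega
      exact hs

lemma eq_Icc_of_forall_descent_eq {S : Finset ℕ} {d : ℕ} (htwo : ∀ s ∈ S, 2 ≤ s)
    (hdes : ∀ i, i + 1 ∈ S → i ∉ S → i = d) : S = Icc (d + 1) (d + S.card) := by
  have hrun := Icc_subset_of_forall_descent_eq htwo hdes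
  refine eq_of_subset_of_card_le (fun s hs => ?_) (by rw [Nat.card_Icc]; omega)
  obtain ⟨hds, hsub⟩ := hrun s hs
  have := card_le_card hsub
  rw [Nat.card_Icc] at this
  exact mem_Icc.mpr ⟨hds, by omega⟩

lemma eq_Icc_of_tabDes_eq_singleton {n b d : ℕ} {S : Finset ℕ} (hS : S ∈ sytSet n b)
    (hdes : tabDes n S = {d}) : S = Icc (d + 1) (d + b) := by
  have htwo : ∀ s ∈ S, 2 ≤ s := fun s => two_le_of_mem_sytSet hS
  simp only [sytSet, mem_filter, mem_powerset] at hS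
  obtain ⟨hsub, hcard, -⟩ := hS
  rw [← hcard]
  refine eq_Icc_of_forall_descent_eq htwo fun i hi hni => ?_
  have hin := mem_Icc.mp (hsub hi)
  have hi_des : i ∈ tabDes n S :=
    mem_filter.mpr ⟨mem_Icc.mpr ⟨by have := htwo _ hi; omega, by omega⟩, hi, hni⟩
  simpa [hdes] using hi_des

lemma filter_sytSet_card_tabDes_eq_one {a k : ℕ} (hk : 1 ≤ k) :
    (sytSet (a + k) k).filter (fun S => (tabDes (a + k) S).card = 1) =
      (Icc k a).image (fun j => Icc (j + 1) (j + k)) := by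
  ext S
  simp only [mem_filter, mem_image, mem_Icc]
  constructor
  · rintro ⟨hS, hone⟩
    obtain ⟨d, hd⟩ := card_eq_one.mp hone
    obtain rfl := eq_Icc_of_tabDes_eq_singleton hS hd
    have := (Icc_mem_sytSet_iff hk).mp hS
    exact ⟨d, ⟨this.1, by omega⟩, rfl⟩
  · rintro ⟨j, ⟨hkj, hja⟩, rfl⟩
    rw [tabDes_Icc (by omega) (by omega) hk, Icc_mem_sytSet_iff hk]
    exact ⟨⟨hkj, by omega⟩, card_singleton j⟩

lemma sytMajGF_one {a k : ℕ} (hk : 1 ≤ k) :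
    sytMajGF a k 1 = ∑ j ∈ Icc k a, X ^ j := by
  have hinj : Function.Injective fun j => Icc (j + 1) (j + k) := fun i j hij => by
    have := (Icc_subset_Icc_iff (by omega)).mp hij.le
    omega
  rw [sytMajGF, filter_sytSet_card_tabDes_eq_one hk, sum_image hinj.injOn]
  refine sum_congr rfl fun j hj => ?_
  rw [mem_Icc] at hj
  rw [tabMaj, tabDes_Icc (by omega) (by omega) hk, sum_singleton, id]

theorem sytMajGF_one_descent_general (n k : ℕ) (hk : 1 ≤ k) :
    sytMajGF (n - k) k 1 = ∑ j ∈ Finset.Icc k (n - k), Polynomial.X ^ j :=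
  sytMajGF_one hk

/-- Base case: the generating function for the major index of standard Young tableaux
of shape `(n-k, k)` with exactly one descent is `q^k + q^{k+1} + ⋯ + q^{n-k}`. -/
theorem sytMajGF_one_descent (n k : ℕ) (hk : 1 ≤ k) (hn : 2 * k ≤ n) :
    sytMajGF (n - k) k 1 = ∑ j ∈ Finset.Icc k (n - k), Polynomial.X ^ j :=
  sytMajGF_one_descent_general n k hk
end

section
/- For n ≥ 2k ≥ 2 and i > 1, the generating function f_{(n-k,k),i}(q) of the major index over standard Young tableaux of shape (n-k,k) with exactly i descents satisfies the recurrence f_{(n-k,k),i}(q) = f_{(n-k-1,k),i}(q) + sum over k₀ from i-1 to k-1 of q^{n-k+k₀} f_{(n-k-1,k₀),i-1}(q), where f_{(k-1,k),i}(q) is interpreted as 0. -/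
open Finset Polynomial
open scoped Classical

lemma mem_sytSet {n b : ℕ} {S : Finset ℕ} :
    S ∈ sytSet n b ↔ S ⊆ Icc 1 n ∧ S.card = b ∧ ∀ m ∈ Icc 1 n, 2 * (S ∩ Icc 1 m).card ≤ m := by
  simp [sytSet]

lemma one_notMem_of_mem_sytSet {n b : ℕ} {S : Finset ℕ} (hS : S ∈ sytSet n b) : 1 ∉ S := by
  intro h1
  obtain ⟨hsub, -, hballot⟩ := mem_sytSet.mp hS
  have hn : 1 ≤ n := (mem_Icc.mp (hsub h1)).2
  have hpos : 0 < (S ∩ Icc 1 1).card := card_pos.mpr ⟨1, by simp [h1]⟩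
  have := hballot 1 (by simp [hn])
  omega

lemma inter_Icc_mem_sytSet {n b m : ℕ} {S : Finset ℕ} (hS : S ∈ sytSet n b) (hm : m ≤ n) :
    S ∩ Icc 1 m ∈ sytSet m (S ∩ Icc 1 m).card := by
  obtain ⟨-, -, hballot⟩ := mem_sytSet.mp hS
  refine mem_sytSet.mpr ⟨inter_subset_right, rfl, fun l hl => ?_⟩
  have hl' := mem_Icc.mp hl
  rw [inter_assoc, inter_eq_right.mpr (Icc_subset_Icc_right hl'.2)]
  exact hballot l (mem_Icc.mpr ⟨hl'.1, hl'.2.trans hm⟩)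

lemma sytSet_succ_filter_notMem (n b : ℕ) :
    (sytSet (n + 1) b).filter (fun S => n + 1 ∉ S) = sytSet n b := by
  ext S
  simp only [mem_filter, mem_sytSet]
  constructor
  · rintro ⟨⟨hsub, hcard, hballot⟩, hlast⟩
    have hsub' : S ⊆ Icc 1 n := fun j hj => by
      have := mem_Icc.mp (hsub hj)
      have : j ≠ n + 1 := fun h => hlast (h ▸ hj)
      exact mem_Icc.mpr (by omega)
    exact ⟨hsub', hcard, fun m hm => hballot m (mem_Icc.mpr (by simp at hm; omega))⟩
  · rintro ⟨hsub, hcard, hballot⟩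
    refine ⟨⟨hsub.trans (Icc_subset_Icc_right n.le_succ), hcard, fun m hm => ?_⟩,
      fun h => by simpa using hsub h⟩
    rcases (mem_Icc.mp hm).2.lt_or_eq with hlt | rfl
    · exact hballot m (mem_Icc.mpr ⟨(mem_Icc.mp hm).1, by omega⟩)
    · have hS : S ∩ Icc 1 (n + 1) = S ∩ Icc 1 n := by
        rw [inter_eq_left.mpr hsub, inter_eq_left.mpr (hsub.trans (Icc_subset_Icc_right n.le_succ))]
      rcases Nat.eq_zero_or_pos n with rfl | hn
      · rw [hS]; simp
      · rw [hS]; exact (hballot n (mem_Icc.mpr ⟨hn, le_rfl⟩)).trans n.le_succ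

lemma tabDes_eq_of_subset_Icc {m n : ℕ} {S : Finset ℕ} (hS : S ⊆ Icc 1 m) (hmn : m ≤ n) :
    tabDes n S = tabDes m S := by
  ext j
  simp only [tabDes, mem_filter, mem_Icc]
  constructor
  · rintro ⟨⟨h1, -⟩, hj, hj'⟩
    exact ⟨⟨h1, by have := mem_Icc.mp (hS hj); omega⟩, hj, hj'⟩
  · rintro ⟨⟨h1, h2⟩, hj, hj'⟩
    exact ⟨⟨h1, h2.trans hmn⟩, hj, hj'⟩

lemma card_tabDes_le (n : ℕ) (S : Finset ℕ) : (tabDes n S).card ≤ S.card :=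
  card_le_card_of_injOn (· + 1) (fun _ hj => (mem_filter.mp hj).2.1)
    (fun _ _ _ _ h => Nat.succ_injective h)

section TailOfSecondRow

variable {S' : Finset ℕ} {d n : ℕ}

lemma union_Icc_inter_Icc (hS' : S' ⊆ Icc 1 (d - 1)) :
    (S' ∪ Icc (d + 1) n) ∩ Icc 1 (d - 1) = S' := by
  ext j
  have := @hS' j
  simp only [mem_inter, mem_union, mem_Icc] at this ⊢
  constructor
  · rintro ⟨hj | hj, hj'⟩
    · exact hj
    · omega
  · exact fun hj => ⟨Or.inl hj, this hj⟩

lemma card_union_Icc (hS' : S' ⊆ Icc 1 (d - 1)) :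
    (S' ∪ Icc (d + 1) n).card = S'.card + (n - d) := by
  rw [card_union_of_disjoint, Nat.card_Icc, Nat.add_sub_add_right]
  exact disjoint_left.mpr fun j hj hj' => by
    have := mem_Icc.mp (hS' hj); have := mem_Icc.mp hj'; omega

lemma tabDes_union_Icc (hS' : S' ⊆ Icc 1 (d - 1)) (hd : 1 ≤ d) (hdn : d < n) :
    tabDes n (S' ∪ Icc (d + 1) n) = insert d (tabDes (d - 1) S') := by
  have hS'j : ∀ j ∈ S', 1 ≤ j ∧ j ≤ d - 1 := fun j hj => mem_Icc.mp (hS' hj)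
  ext j
  simp only [tabDes, mem_insert, mem_filter, mem_union, mem_Icc]
  constructor
  · rintro ⟨hj, hj1 | hj1, hj0⟩
    · have := hS'j _ hj1; exact Or.inr ⟨by omega, hj1, fun h => hj0 (Or.inl h)⟩
    · left; omega
  · rintro (rfl | ⟨hj, hj1, hj0⟩)
    · refine ⟨by omega, Or.inr (by omega), ?_⟩
      rintro (h | h)
      · have := hS'j _ h; omega
      · omega
    · have := hS'j _ hj1
      refine ⟨by omega, Or.inl hj1, ?_⟩
      rintro (h | h)
      · exact hj0 h
      · omega

lemma tabMaj_union_Icc (hS' : S' ⊆ Icc 1 (d - 1)) (hd : 1 ≤ d) (hdn : d < n) :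
    tabMaj n (S' ∪ Icc (d + 1) n) = d + tabMaj (d - 1) S' := by
  have hd' : d ∉ tabDes (d - 1) S' := fun h => by simp [tabDes] at h; omega
  rw [tabMaj, tabDes_union_Icc hS' hd hdn, sum_insert hd', tabMaj, id]

lemma card_tabDes_union_Icc (hS' : S' ⊆ Icc 1 (d - 1)) (hd : 1 ≤ d) (hdn : d < n) :
    (tabDes n (S' ∪ Icc (d + 1) n)).card = (tabDes (d - 1) S').card + 1 := by
  have hd' : d ∉ tabDes (d - 1) S' := fun h => by simp [tabDes] at h; omega
  rw [tabDes_union_Icc hS' hd hdn, card_insert_of_notMem hd']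

lemma union_Icc_mem_sytSet {k₀ : ℕ} (hS' : S' ∈ sytSet (d - 1) k₀) (hdn : d ≤ n)
    (hb : 2 * (k₀ + (n - d)) ≤ n) : S' ∪ Icc (d + 1) n ∈ sytSet n (k₀ + (n - d)) := by
  obtain ⟨hsub, hcard, hballot⟩ := mem_sytSet.mp hS'
  refine mem_sytSet.mpr ⟨union_subset (hsub.trans (Icc_subset_Icc_right (by omega)))
    (Icc_subset_Icc_left (by omega)), by rw [card_union_Icc hsub, hcard], fun m hm => ?_⟩
  have hm' := mem_Icc.mp hm
  have hsplit : (S' ∪ Icc (d + 1) n) ∩ Icc 1 m ⊆ (S' ∩ Icc 1 m) ∪ Icc (d + 1) m := by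
    intro j hj
    simp only [mem_inter, mem_union, mem_Icc] at hj ⊢
    rcases hj with ⟨hj | hj, hj'⟩
    · exact Or.inl ⟨hj, hj'⟩
    · exact Or.inr ⟨hj.1, hj'.2⟩
  have hle := (card_le_card hsplit).trans (card_union_le _ _)
  rw [Nat.card_Icc] at hle
  by_cases hmd : m ≤ d - 1
  · have := hballot m (mem_Icc.mpr ⟨hm'.1, hmd⟩)
    omega
  · have : (S' ∩ Icc 1 m).card ≤ k₀ := hcard ▸ card_le_card inter_subset_left
    omega

end TailOfSecondRow

lemma eq_of_union_Icc_eq {S₁ S₂ : Finset ℕ} {d₁ d₂ n : ℕ} (h₁ : S₁ ⊆ Icc 1 (d₁ - 1))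
    (h₂ : S₂ ⊆ Icc 1 (d₂ - 1)) (hd₁ : d₁ ≤ n) (hd₂ : d₂ ≤ n)
    (h : S₁ ∪ Icc (d₁ + 1) n = S₂ ∪ Icc (d₂ + 1) n) : d₁ = d₂ ∧ S₁ = S₂ := by
  have hnotMem : ∀ {S : Finset ℕ} {d : ℕ}, S ⊆ Icc 1 (d - 1) → d ∉ S ∪ Icc (d + 1) n :=
    fun hS hd => by
      rcases mem_union.mp hd with hd | hd
      · have := mem_Icc.mp (hS hd); omega
      · have := mem_Icc.mp hd; omega
  have hd : d₁ = d₂ := by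
    by_contra hne
    rcases Nat.lt_or_gt_of_ne hne with hlt | hlt
    · exact hnotMem h₂ (h ▸ mem_union_right _ (mem_Icc.mpr ⟨hlt, hd₂⟩))
    · exact hnotMem h₁ (h.symm ▸ mem_union_right _ (mem_Icc.mpr ⟨hlt, hd₁⟩))
  subst hd
  exact ⟨rfl, by rw [← union_Icc_inter_Icc h₁, h, union_Icc_inter_Icc h₂]⟩

lemma exists_union_Icc_eq_of_mem_sytSet {n b : ℕ} {S : Finset ℕ} (hS : S ∈ sytSet n b)
    (hn : n ∈ S) : ∃ d, 1 ≤ d ∧ d < n ∧ (S ∩ Icc 1 (d - 1)) ∪ Icc (d + 1) n = S := by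
  have hsub := (mem_sytSet.mp hS).1
  have hn1 : 1 ≤ n := (mem_Icc.mp (hsub hn)).1
  have h1S := one_notMem_of_mem_sytSet hS
  obtain ⟨d, hd1, hdS, hdn, htail⟩ :
      ∃ d, 1 ≤ d ∧ d ∉ S ∧ d ≤ n ∧ ∀ j, d < j → j ≤ n → j ∈ S :=
    ⟨Nat.findGreatest (· ∉ S) n, Nat.le_findGreatest hn1 h1S,
      Nat.findGreatest_spec (P := (· ∉ S)) hn1 h1S, Nat.findGreatest_le n,
      fun j hj hjn => not_not.mp (Nat.findGreatest_is_greatest hj hjn)⟩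
  replace hdn : d < n := hdn.lt_of_ne (by rintro rfl; exact hdS hn)
  refine ⟨d, hd1, hdn, ?_⟩
  ext j
  simp only [mem_union, mem_inter, mem_Icc]
  constructor
  · rintro (⟨hj, -⟩ | ⟨hj, hjn⟩)
    · exact hj
    · exact htail j hj hjn
  · intro hj
    have := mem_Icc.mp (hsub hj)
    rcases Nat.lt_or_gt_of_ne (show j ≠ d by rintro rfl; exact hdS hj) with h | h
    · exact Or.inl ⟨hj, by omega, by omega⟩
    · exact Or.inr ⟨h, this.2⟩

noncomputable def majGF (n b i : ℕ) : ℚ[X] :=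
  ∑ S ∈ (sytSet n b).filter (fun S => (tabDes n S).card = i), X ^ tabMaj n S

lemma sytMajGF_eq_majGF (a b i : ℕ) : sytMajGF a b i = majGF (a + b) b i := rfl

lemma sum_filter_notMem_last (n b i : ℕ) :
    ∑ S ∈ ((sytSet (n + 1) b).filter (fun S => (tabDes (n + 1) S).card = i)).filter
      (fun S => n + 1 ∉ S), (X : ℚ[X]) ^ tabMaj (n + 1) S = majGF n b i := by
  rw [filter_comm, sytSet_succ_filter_notMem, majGF]
  have hdes : ∀ S ∈ sytSet n b, tabDes (n + 1) S = tabDes n S := fun S hS =>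
    tabDes_eq_of_subset_Icc (mem_sytSet.mp hS).1 n.le_succ
  refine sum_congr (filter_congr fun S hS => by rw [hdes S hS]) fun S hS => ?_
  rw [tabMaj, tabMaj, hdes S (mem_filter.mp hS).1]

lemma sum_filter_mem_last {n b i : ℕ} (hb : 1 ≤ b) (hbn : 2 * b ≤ n) (hi : 1 ≤ i) :
    ∑ S ∈ ((sytSet n b).filter (fun S => (tabDes n S).card = i)).filter (fun S => n ∈ S),
      (X : ℚ[X]) ^ tabMaj n S =
    ∑ k₀ ∈ Icc (i - 1) (b - 1), X ^ (n - b + k₀) * majGF (n - b + k₀ - 1) k₀ (i - 1) := by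
  simp_rw [majGF, mul_sum, ← pow_add]
  rw [sum_sigma']
  symm
  refine sum_nbij (fun p => p.2 ∪ Icc (n - b + p.1 + 1) n) ?_ ?_ ?_ ?_
  · rintro ⟨k₀, S'⟩ hp
    obtain ⟨hk₀, hS', hdes⟩ := by simpa only [mem_sigma, mem_filter, mem_Icc] using hp
    have hsub := (mem_sytSet.mp hS').1
    have hmem := union_Icc_mem_sytSet hS' (n := n) (by omega) (by omega)
    rw [show k₀ + (n - (n - b + k₀)) = b by omega] at hmem
    refine mem_filter.mpr ⟨mem_filter.mpr ⟨hmem, ?_⟩, mem_union_right _ (by simp; omega)⟩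
    rw [card_tabDes_union_Icc hsub (by omega) (by omega), hdes]
    omega
  · rintro ⟨k₁, S₁⟩ h₁ ⟨k₂, S₂⟩ h₂ h
    simp only [mem_coe, mem_sigma, mem_filter, mem_Icc] at h₁ h₂
    obtain ⟨hd, rfl⟩ := eq_of_union_Icc_eq (mem_sytSet.mp h₁.2.1).1 (mem_sytSet.mp h₂.2.1).1
      (by omega) (by omega) h
    obtain rfl : k₁ = k₂ := by omega
    rfl
  · intro S hS
    obtain ⟨⟨hS, hdes⟩, hn⟩ := by simpa only [mem_coe, mem_filter] using hS
    obtain ⟨d, hd1, hdn, hSeq⟩ := exists_union_Icc_eq_of_mem_sytSet hS hn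
    set S' := S ∩ Icc 1 (d - 1)
    have hsub : S' ⊆ Icc 1 (d - 1) := inter_subset_right
    have hcard : S'.card + (n - d) = b := by
      rw [← card_union_Icc hsub, hSeq, (mem_sytSet.mp hS).2.1]
    have hdes' : (tabDes (d - 1) S').card + 1 = i := by
      rw [← card_tabDes_union_Icc hsub hd1 hdn, hSeq, hdes]
    have hd : n - b + S'.card = d := by omega
    have hle := card_tabDes_le (d - 1) S'
    refine ⟨⟨S'.card, S'⟩, ?_, ?_⟩
    · simp only [mem_coe, mem_sigma, mem_filter, mem_Icc, hd]
      exact ⟨⟨by omega, by omega⟩, inter_Icc_mem_sytSet hS (by omega), by omega⟩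
    · simp only [hd, hSeq]
  · rintro ⟨k₀, S'⟩ hp
    obtain ⟨hk₀, hS', -⟩ := by simpa only [mem_sigma, mem_filter, mem_Icc] using hp
    dsimp only
    rw [tabMaj_union_Icc (mem_sytSet.mp hS').1 (by omega) (by omega)]

lemma majGF_recurrence {n b i : ℕ} (hb : 1 ≤ b) (hbn : 2 * b ≤ n) (hi : 1 ≤ i) :
    majGF n b i = majGF (n - 1) b i +
      ∑ k₀ ∈ Icc (i - 1) (b - 1), X ^ (n - b + k₀) * majGF (n - b - 1 + k₀) k₀ (i - 1) := by
  obtain ⟨m, rfl⟩ : ∃ m, n = m + 1 := ⟨n - 1, by omega⟩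
  rw [majGF, ← sum_filter_not_add_sum_filter _ (fun S => m + 1 ∈ S), sum_filter_notMem_last,
    sum_filter_mem_last hb hbn hi, Nat.add_sub_cancel]
  refine congrArg _ (sum_congr rfl fun k₀ _ => ?_)
  rw [show m + 1 - b + k₀ - 1 = m + 1 - b - 1 + k₀ by omega]

/-- The recurrence for the major-index generating function of two-rowed standard Young
tableaux of shape `(n-k, k)` with exactly `i > 1` descents.  (When `n = 2k` the term
`sytMajGF (n-k-1) k i` corresponds to the non-shape `(k-1,k)` and vanishes.) -/
theorem sytMajGF_recurrence (n k i : ℕ) (hk : 1 ≤ k) (hn : 2 * k ≤ n) (hi : 1 < i) :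
    sytMajGF (n - k) k i =
      sytMajGF (n - k - 1) k i +
        ∑ k₀ ∈ Finset.Icc (i - 1) (k - 1),
          Polynomial.X ^ (n - k + k₀) * sytMajGF (n - k - 1) k₀ (i - 1) := by
  simp only [sytMajGF_eq_majGF, show n - k + k = n by omega, show n - k - 1 + k = n - 1 by omega]
  exact majGF_recurrence hk hn hi.le
end

section
/- For n odd, n = 2m+1, every standard Young tableau of shape (m+1,m) with exactly m descents has major index between m² and m² + m, and for each value M in this range there is exactly one such tableau with major index M. -/
open Finset Polynomial
open scoped Classical

/-!
The ballot condition forces `1 ∉ S`, so every `s ∈ S` lies in `[2, 2m+1]` and is preceded by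
the candidate descent `s - 1`; having `m = |S|` descents therefore means that `S` contains no
two consecutive integers. Such an `S` meets each pair `{2j, 2j+1}`, `1 ≤ j ≤ m`, exactly once,
and once it takes the odd element `2j+1` it must take `2j+3` next. Hence `S` is the set of the
first `m - k` even numbers followed by the next `k` odd ones, whose major index is
`∑ (s - 1) = m² + k`.
-/

lemma mem_sytSet_iff {n b : ℕ} {S : Finset ℕ} :
    S ∈ sytSet n b ↔ S ⊆ Icc 1 n ∧ S.card = b ∧
      ∀ x ∈ Icc 1 n, 2 * (S ∩ Icc 1 x).card ≤ x := by
  simp [sytSet]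

/-- The second row `{2, 4, …, 2(m-k), 2(m-k)+3, …, 2m+1}`. -/
def switchRow (m k : ℕ) : Finset ℕ :=
  (Icc 1 m).image (fun j => 2 * j + if m - k < j then 1 else 0)

section switchRow

variable (m k : ℕ)

lemma switchRow_injOn :
    Set.InjOn (fun j => 2 * j + if m - k < j then 1 else 0) (Icc 1 m) := by
  intro a _ b _ h
  simp only at h
  split_ifs at h <;> omega

lemma card_switchRow : (switchRow m k).card = m := by
  rw [switchRow, card_image_of_injOn (switchRow_injOn m k), Nat.card_Icc, Nat.add_sub_cancel]

lemma switchRow_subset : switchRow m k ⊆ Icc 2 (2 * m + 1) := by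
  intro x hx
  obtain ⟨j, hj, rfl⟩ := mem_image.mp hx
  rw [mem_Icc] at hj ⊢
  split_ifs <;> omega

lemma succ_notMem_switchRow : ∀ s ∈ switchRow m k, s + 1 ∉ switchRow m k := by
  simp only [switchRow, mem_image, mem_Icc]
  rintro _ ⟨i, hi, rfl⟩ ⟨j, hj, hij⟩
  split_ifs at hij <;> omega

lemma two_mul_card_switchRow_inter_le (x : ℕ) : 2 * (switchRow m k ∩ Icc 1 x).card ≤ x := by
  have hsub : switchRow m k ∩ Icc 1 x ⊆
      (Icc 1 (x / 2)).image (fun j => 2 * j + if m - k < j then 1 else 0) := by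
    intro y hy
    obtain ⟨hy, hyx⟩ := mem_inter.mp hy
    obtain ⟨j, hj, rfl⟩ := mem_image.mp hy
    refine mem_image.mpr ⟨j, ?_, rfl⟩
    rw [mem_Icc] at hj hyx ⊢
    split_ifs at hyx <;> omega
  have := (card_le_card hsub).trans card_image_le
  rw [Nat.card_Icc] at this
  omega

lemma switchRow_mem_sytSet : switchRow m k ∈ sytSet (2 * m + 1) m :=
  mem_sytSet_iff.mpr ⟨(switchRow_subset m k).trans (Icc_subset_Icc_left (by norm_num)),
    card_switchRow m k, fun x _ => two_mul_card_switchRow_inter_le m k x⟩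

end switchRow

section descents

variable {n : ℕ} {S : Finset ℕ}

lemma tabDes_eq_image_pred (hS : S ⊆ Icc 2 n) (hsep : ∀ s ∈ S, s + 1 ∉ S) :
    tabDes n S = S.image (· - 1) := by
  ext d
  simp only [tabDes, mem_filter, mem_Icc, mem_image]
  constructor
  · rintro ⟨-, hd, -⟩
    exact ⟨d + 1, hd, rfl⟩
  · rintro ⟨s, hs, rfl⟩
    have hs2 := mem_Icc.mp (hS hs)
    obtain ⟨t, rfl⟩ : ∃ t, s = t + 1 := ⟨s - 1, by omega⟩
    exact ⟨by omega, hs, fun ht => hsep t ht hs⟩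

lemma pred_injOn_of_subset_Icc (hS : S ⊆ Icc 2 n) : Set.InjOn (· - 1) (S : Set ℕ) := by
  intro a ha b hb h
  have := mem_Icc.mp (hS ha)
  have := mem_Icc.mp (hS hb)
  simp only at h
  omega

lemma card_tabDes_of_sep (hS : S ⊆ Icc 2 n) (hsep : ∀ s ∈ S, s + 1 ∉ S) :
    (tabDes n S).card = S.card := by
  rw [tabDes_eq_image_pred hS hsep, card_image_of_injOn (pred_injOn_of_subset_Icc hS)]

lemma tabMaj_of_sep (hS : S ⊆ Icc 2 n) (hsep : ∀ s ∈ S, s + 1 ∉ S) :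
    tabMaj n S = ∑ s ∈ S, (s - 1) := by
  rw [tabMaj, tabDes_eq_image_pred hS hsep, sum_image (pred_injOn_of_subset_Icc hS)]
  rfl

/-- Each descent `d` is paired with `d + 1 ∈ S`, and then `d ∉ S`. -/
lemma succ_notMem_of_card_tabDes_eq (hdes : (tabDes n S).card = S.card) :
    ∀ s ∈ S, s + 1 ∉ S := by
  have himg : (tabDes n S).image (· + 1) = S := by
    refine eq_of_subset_of_card_le (fun x hx => ?_) ?_
    · obtain ⟨d, hd, rfl⟩ := mem_image.mp hx
      exact (mem_filter.mp hd).2.1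
    · rw [card_image_of_injective _ (add_left_injective 1), hdes]
  intro s hs hs1
  rw [← himg] at hs1
  obtain ⟨d, hd, hds⟩ := mem_image.mp hs1
  obtain rfl : d = s := by omega
  exact (mem_filter.mp hd).2.2 hs

end descents

lemma sum_Icc_two_mul_sub_one (m : ℕ) : ∑ j ∈ Icc 1 m, (2 * j - 1) = m ^ 2 := by
  induction m with
  | zero => simp
  | succ n ih =>
    rw [sum_Icc_succ_top (by omega), ih]
    ring_nf
    omega

lemma sum_switchRow_pred (m k : ℕ) (hk : k ≤ m) :
    ∑ s ∈ switchRow m k, (s - 1) = m ^ 2 + k := by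
  have hsplit : ∀ j ∈ Icc 1 m, (2 * j + if m - k < j then 1 else 0) - 1
      = (2 * j - 1) + if m - k < j then 1 else 0 := by
    intro j hj
    rw [mem_Icc] at hj
    split_ifs <;> omega
  have hswitch : {j ∈ Icc 1 m | m - k < j} = Ioc (m - k) m := by
    ext j
    simp only [mem_filter, mem_Icc, mem_Ioc]
    omega
  rw [switchRow, sum_image (switchRow_injOn m k), sum_congr rfl hsplit, sum_add_distrib,
    sum_Icc_two_mul_sub_one, ← card_filter, hswitch, Nat.card_Ioc]
  omega

lemma tabMaj_switchRow (m k : ℕ) (hk : k ≤ m) :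
    tabMaj (2 * m + 1) (switchRow m k) = m ^ 2 + k := by
  rw [tabMaj_of_sep (switchRow_subset m k) (succ_notMem_switchRow m k), sum_switchRow_pred m k hk]

lemma card_tabDes_switchRow (m k : ℕ) : (tabDes (2 * m + 1) (switchRow m k)).card = m := by
  rw [card_tabDes_of_sep (switchRow_subset m k) (succ_notMem_switchRow m k), card_switchRow]

lemma Finset.eq_Ioc_of_succ_mem {A : Finset ℕ} {m : ℕ} (hA : A ⊆ Icc 1 m)
    (hsucc : ∀ j ∈ A, j < m → j + 1 ∈ A) : A = Ioc (m - A.card) m := by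
  have hm : A.card ≤ m := by simpa using card_le_card hA
  refine eq_of_subset_of_card_le (fun j hj => ?_) (by rw [Nat.card_Ioc]; omega)
  have hjm := mem_Icc.mp (hA hj)
  have htail : Icc j m ⊆ A := by
    intro i hi
    obtain ⟨hji, him⟩ := mem_Icc.mp hi
    clear hi
    induction i, hji using Nat.le_induction with
    | base => exact hj
    | succ i hji ih => exact hsucc i (ih (by omega)) (by omega)
  have := card_le_card htail
  rw [Nat.card_Icc] at this
  exact mem_Ioc.mpr ⟨by omega, hjm.2⟩

section separated

variable {m : ℕ} {S : Finset ℕ}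

/-- `s ↦ s / 2` is injective on a set without consecutive elements, hence maps `S` onto `[1, m]`. -/
lemma mem_or_succ_mem_of_sep (hS : S ⊆ Icc 2 (2 * m + 1)) (hcard : S.card = m)
    (hsep : ∀ s ∈ S, s + 1 ∉ S) : ∀ j ∈ Icc 1 m, 2 * j ∈ S ∨ 2 * j + 1 ∈ S := by
  have himg : S.image (· / 2) ⊆ Icc 1 m := by
    intro x hx
    obtain ⟨s, hs, rfl⟩ := mem_image.mp hx
    have := mem_Icc.mp (hS hs)
    exact mem_Icc.mpr ⟨by omega, by omega⟩
  have hinj : Set.InjOn (· / 2) (S : Set ℕ) := by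
    intro s hs t ht hst
    simp only at hst
    by_contra hne
    rcases (by omega : t = s + 1 ∨ s = t + 1) with rfl | rfl
    exacts [hsep s hs ht, hsep t ht hs]
  have hsurj : S.image (· / 2) = Icc 1 m :=
    eq_of_subset_of_card_le himg (by rw [card_image_of_injOn hinj, hcard, Nat.card_Icc]; omega)
  intro j hj
  rw [← hsurj] at hj
  obtain ⟨s, hs, rfl⟩ := mem_image.mp hj
  rcases Nat.even_or_odd' s with ⟨i, rfl | rfl⟩
  · left; rwa [Nat.mul_div_cancel_left i two_pos]
  · right; rwa [Nat.mul_add_div two_pos, Nat.div_eq_of_lt one_lt_two, add_zero]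

/-- `k` counts the pairs `{2j, 2j+1}` from which `S` takes the odd element. -/
lemma exists_eq_switchRow_of_sep (hS : S ⊆ Icc 2 (2 * m + 1)) (hcard : S.card = m)
    (hsep : ∀ s ∈ S, s + 1 ∉ S) : ∃ k ≤ m, S = switchRow m k := by
  have hpair := mem_or_succ_mem_of_sep hS hcard hsep
  set A := {j ∈ Icc 1 m | 2 * j + 1 ∈ S}
  have hsucc : ∀ j ∈ A, j < m → j + 1 ∈ A := by
    intro j hj hjm
    obtain ⟨hj, hjS⟩ := mem_filter.mp hj
    have hj' : j + 1 ∈ Icc 1 m := mem_Icc.mpr ⟨by omega, hjm⟩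
    refine mem_filter.mpr ⟨hj', (hpair _ hj').resolve_left fun h => hsep _ hjS ?_⟩
    rwa [show 2 * (j + 1) = 2 * j + 1 + 1 by ring] at h
  have hAeq : A = Ioc (m - A.card) m := Finset.eq_Ioc_of_succ_mem (filter_subset _ _) hsucc
  have hk : A.card ≤ m := by simpa using card_le_card (filter_subset _ (Icc 1 m))
  refine ⟨A.card, hk, (eq_of_subset_of_card_le (fun x hx => ?_) ?_).symm⟩
  · obtain ⟨j, hj, rfl⟩ := mem_image.mp hx
    have hjA : j ∈ A ↔ m - A.card < j :=
      (Finset.ext_iff.mp hAeq j).trans (mem_Ioc.trans (and_iff_left (mem_Icc.mp hj).2))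
    split_ifs with hjk
    · exact (mem_filter.mp (hjA.mpr hjk)).2
    · exact (hpair j hj).resolve_right fun h => hjk (hjA.mp (mem_filter.mpr ⟨hj, h⟩))
  · rw [hcard, card_switchRow]

end separated

lemma exists_eq_switchRow_of_card_tabDes {m : ℕ} {S : Finset ℕ} (hS : S ∈ sytSet (2 * m + 1) m)
    (hdes : (tabDes (2 * m + 1) S).card = m) : ∃ k ≤ m, S = switchRow m k := by
  obtain ⟨hsub, hcard, -⟩ := mem_sytSet_iff.mp hS
  have hsub2 : S ⊆ Icc 2 (2 * m + 1) := by
    intro s hs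
    have hs1 : s ≠ 1 := fun h => one_notMem_of_mem_sytSet hS (h ▸ hs)
    have := mem_Icc.mp (hsub hs)
    exact mem_Icc.mpr ⟨by omega, this.2⟩
  exact exists_eq_switchRow_of_sep hsub2 hcard
    (succ_notMem_of_card_tabDes_eq (hdes.trans hcard.symm))

/-- For odd `n = 2m+1`, every standard Young tableau of shape `(m+1, m)` with exactly `m`
descents has major index between `m²` and `m² + m`, and for each `M` in this range there
is exactly one such tableau with major index `M`. -/
theorem syt_odd_max_descents (m : ℕ) :
    (∀ S ∈ (sytSet (2 * m + 1) m).filter (fun S => (tabDes (2 * m + 1) S).card = m),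
        m ^ 2 ≤ tabMaj (2 * m + 1) S ∧ tabMaj (2 * m + 1) S ≤ m ^ 2 + m) ∧
      ∀ M, m ^ 2 ≤ M → M ≤ m ^ 2 + m →
        ((sytSet (2 * m + 1) m).filter
          (fun S => (tabDes (2 * m + 1) S).card = m ∧ tabMaj (2 * m + 1) S = M)).card = 1 := by
  refine ⟨fun S hS => ?_, fun M hM₁ hM₂ => card_eq_one.mpr ⟨switchRow m (M - m ^ 2), ?_⟩⟩
  · obtain ⟨hS, hdes⟩ := mem_filter.mp hS
    obtain ⟨k, hk, rfl⟩ := exists_eq_switchRow_of_card_tabDes hS hdes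
    rw [tabMaj_switchRow m k hk]
    omega
  · ext S
    simp only [mem_filter, mem_singleton]
    constructor
    · rintro ⟨hS, hdes, hmaj⟩
      obtain ⟨k, hk, rfl⟩ := exists_eq_switchRow_of_card_tabDes hS hdes
      rw [tabMaj_switchRow m k hk] at hmaj
      rw [← hmaj, Nat.add_sub_cancel_left]
    · rintro rfl
      refine ⟨switchRow_mem_sytSet m _, card_tabDes_switchRow m _, ?_⟩
      rw [tabMaj_switchRow m _ (by omega)]
      omega
end

section
/- For n ≥ 1, the generating function by major index of 321-avoiding permutations of length n with exactly one descent equals (1+q)^n - (1+q+q²+...+q^n). -/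
open Finset Polynomial
open scoped Classical

/-- The descent set of a permutation `σ` of `{1,…,n}` (as a permutation of `Fin n`,
written in one-line notation with 1-based positions): those positions `i ∈ {1,…,n-1}`
with `σ(i) > σ(i+1)`. -/
noncomputable def permDes (n : ℕ) (σ : Equiv.Perm (Fin n)) : Finset ℕ :=
  (Finset.Ico 1 n).filter (fun i => ∀ h : i < n, σ ⟨i, h⟩ < σ ⟨i - 1, by omega⟩)

/-- The major index: the sum of the descent positions. -/
noncomputable def permMaj (n : ℕ) (σ : Equiv.Perm (Fin n)) : ℕ := (permDes n σ).sum id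

/-- `σ` avoids the pattern 321. -/
def Avoids321 {n : ℕ} (σ : Equiv.Perm (Fin n)) : Prop :=
  ¬ ∃ i j k : Fin n, i < j ∧ j < k ∧ σ k < σ j ∧ σ j < σ i

/-- `σ` avoids the pattern 132. -/
def Avoids132 {n : ℕ} (σ : Equiv.Perm (Fin n)) : Prop :=
  ¬ ∃ i j k : Fin n, i < j ∧ j < k ∧ σ i < σ k ∧ σ k < σ j

/-- `σ` avoids the pattern 231. -/
def Avoids231 {n : ℕ} (σ : Equiv.Perm (Fin n)) : Prop :=
  ¬ ∃ i j k : Fin n, i < j ∧ j < k ∧ σ k < σ i ∧ σ i < σ j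

/-- `A n i = ∑ q^{maj σ}` over 321-avoiding permutations of length `n` with exactly
`i` descents. -/
noncomputable def A (n i : ℕ) : Polynomial ℚ :=
  (Finset.univ.filter
      (fun σ : Equiv.Perm (Fin n) => Avoids321 σ ∧ (permDes n σ).card = i)).sum
    (fun σ => Polynomial.X ^ permMaj n σ)

/-!
A 321 pattern at positions `i < j < k` forces a descent in `(i, j]` and another in `(j, k]`, so
every permutation with a single descent avoids 321. A permutation whose only descent is at `d`
is increasing on its first `d` and on its last `n - d` positions, hence determined by the set
`S = σ {1, …, d}`: it lists `S` increasingly and then `Sᶜ` increasingly (a Grassmannian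
permutation). Conversely this permutation has its descent exactly at `d` unless
`S = {1, …, d}`, where it is the identity. So there are `C(n, d) - 1` such permutations, each of
major index `d`, and `∑_d (C(n, d) - 1) q^d = (1 + q)^n - (1 + q + ⋯ + q^n)`.
-/

section Descents

variable {n : ℕ} {σ : Equiv.Perm (Fin n)}

lemma permDes_subset_Ico : permDes n σ ⊆ Ico 1 n := filter_subset _ _

lemma succ_mem_permDes_iff {i : ℕ} (h : i + 1 < n) :
    i + 1 ∈ permDes n σ ↔ σ ⟨i + 1, h⟩ < σ ⟨i, by omega⟩ := by
  simp [permDes, h]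

lemma apply_lt_apply_succ_of_succ_notMem_permDes {i : ℕ} (h : i + 1 < n)
    (hi : i + 1 ∉ permDes n σ) : σ ⟨i, by omega⟩ < σ ⟨i + 1, h⟩ := by
  rw [succ_mem_permDes_iff h, not_lt] at hi
  exact hi.lt_of_ne (σ.injective.ne (by simp))

lemma apply_lt_apply_of_forall_notMem_permDes {a b : Fin n} (hab : a < b)
    (h : ∀ t, (a : ℕ) < t → t ≤ b → t ∉ permDes n σ) : σ a < σ b := by
  obtain ⟨b, hb⟩ := b
  induction b with
  | zero => exact absurd (Fin.lt_def.mp hab) (Nat.not_lt_zero _)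
  | succ m ih =>
    have step := apply_lt_apply_succ_of_succ_notMem_permDes hb (h (m + 1) hab le_rfl)
    rcases Nat.lt_succ_iff_lt_or_eq.mp (Fin.lt_def.mp hab) with ham | ham
    · exact (ih (by omega) ham fun t ht ht' => h t ht (by simp only at ht' ⊢; omega)).trans step
    · rwa [show a = ⟨m, by omega⟩ from Fin.ext ham]

lemma exists_mem_permDes_of_apply_lt_apply {a b : Fin n} (hab : a < b) (h : σ b < σ a) :
    ∃ t ∈ permDes n σ, (a : ℕ) < t ∧ t ≤ b := by
  by_contra! hc
  exact h.asymm <| apply_lt_apply_of_forall_notMem_permDes hab fun t ht ht' hmem =>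
    (hc t hmem ht).not_ge ht'

theorem avoids321_of_card_permDes_le_one (h : #(permDes n σ) ≤ 1) : Avoids321 σ := by
  rintro ⟨i, j, k, hij, hjk, hkj, hji⟩
  obtain ⟨s, hs, his, hsj⟩ := exists_mem_permDes_of_apply_lt_apply hij hji
  obtain ⟨t, ht, hjt, htk⟩ := exists_mem_permDes_of_apply_lt_apply hjk hkj
  have := card_le_one.mp h s hs t ht
  omega

lemma eq_one_of_permDes_eq_empty (h : permDes n σ = ∅) : σ = 1 := by
  have hmono : StrictMono σ := fun a b hab =>
    apply_lt_apply_of_forall_notMem_permDes hab (by simp [h])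
  ext i : 1
  exact DFunLike.congr_fun
    (Subsingleton.elim (hmono.orderIsoOfSurjective σ σ.surjective) (OrderIso.refl _)) i

lemma strictMono_apply_add {c m : ℕ} (hcm : c + m ≤ n)
    (h : ∀ t ∈ permDes n σ, t ≤ c ∨ c + m ≤ t) :
    StrictMono fun k : Fin m => σ ⟨c + k, by omega⟩ := fun k l hkl =>
  apply_lt_apply_of_forall_notMem_permDes (Fin.lt_def.mpr (by simpa using hkl))
    fun t ht ht' hmem => by have := h t hmem; simp only at ht ht'; omega

lemma permDes_eq_singleton_iff {d : ℕ} :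
    permDes n σ = {d} ↔ #(permDes n σ) = 1 ∧ permMaj n σ = d := by
  constructor
  · intro h
    simp [permMaj, h]
  · rintro ⟨h, rfl⟩
    obtain ⟨a, ha⟩ := card_eq_one.mp h
    simp [permMaj, ha]

end Descents

section Grassmannian

variable {n d : ℕ}

/-- Positions `1, …, d` in the one-based convention of `permDes`. -/
def initialSegment (n d : ℕ) : Finset (Fin n) := {i | (i : ℕ) < d}

lemma card_initialSegment (hd : d ≤ n) : #(initialSegment n d) = d := by
  simp [initialSegment, Fin.card_filter_val_lt, hd]

lemma card_compl_of_card_eq {S : Finset (Fin n)} (hS : #S = d) : #Sᶜ = n - d := by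
  rw [card_compl, hS, Fintype.card_fin]

variable (S : Finset (Fin n)) (hS : #S = d)

/-- The permutation listing the elements of `S` increasingly, then those of `Sᶜ` increasingly. -/
noncomputable def grassmannianFun (i : Fin n) : Fin n :=
  if h : (i : ℕ) < d then S.orderEmbOfFin hS ⟨i, h⟩
  else Sᶜ.orderEmbOfFin (card_compl_of_card_eq hS) ⟨i - d, by omega⟩

lemma grassmannianFun_mem_iff (i : Fin n) : grassmannianFun S hS i ∈ S ↔ (i : ℕ) < d := by
  unfold grassmannianFun
  split_ifs with h
  · simp [h, orderEmbOfFin_mem]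
  · simpa [h] using mem_compl.mp (orderEmbOfFin_mem _ _ _)

lemma grassmannianFun_injective : Function.Injective (grassmannianFun S hS) := by
  intro i j hij
  have hblock : (i : ℕ) < d ↔ (j : ℕ) < d := by
    rw [← grassmannianFun_mem_iff S hS, hij, grassmannianFun_mem_iff]
  unfold grassmannianFun at hij
  split_ifs at hij with hi hj hj
  · simpa [Fin.ext_iff] using (S.orderEmbOfFin hS).injective hij
  · exact absurd (hblock.mp hi) hj
  · exact absurd (hblock.mpr hj) hi
  · have := (Sᶜ.orderEmbOfFin _).injective hij
    simp only [Fin.ext_iff] at this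
    omega

noncomputable def grassmannianPerm : Equiv.Perm (Fin n) :=
  Equiv.ofBijective _ (Finite.injective_iff_bijective.mp (grassmannianFun_injective S hS))

lemma grassmannianPerm_apply (i : Fin n) : grassmannianPerm S hS i = grassmannianFun S hS i := rfl

lemma image_initialSegment_grassmannianPerm :
    (initialSegment n d).image (grassmannianPerm S hS) = S := by
  ext x
  obtain ⟨i, rfl⟩ := (grassmannianPerm S hS).surjective x
  rw [(grassmannianPerm S hS).injective.mem_finset_image, grassmannianPerm_apply,
    grassmannianFun_mem_iff]
  simp [initialSegment]

lemma permDes_grassmannianPerm_subset : permDes n (grassmannianPerm S hS) ⊆ {d} := by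
  intro t ht
  obtain ⟨ht₁, ht₂⟩ := mem_Ico.mp (permDes_subset_Ico ht)
  obtain ⟨i, rfl⟩ : ∃ i, t = i + 1 := ⟨t - 1, by omega⟩
  rw [succ_mem_permDes_iff ht₂, grassmannianPerm_apply, grassmannianPerm_apply] at ht
  rw [mem_singleton]
  by_contra hne
  unfold grassmannianFun at ht
  split_ifs at ht with h₁ h₀ h₀ <;> simp only at h₁ h₀
  · exact ht.not_gt ((S.orderEmbOfFin hS).strictMono (Fin.lt_def.mpr (by simp)))
  · omega
  · omega
  · exact ht.not_gt ((Sᶜ.orderEmbOfFin _).strictMono (Fin.lt_def.mpr (by simp only; omega)))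

lemma mem_permDes_grassmannianPerm (hne : S ≠ initialSegment n d) :
    d ∈ permDes n (grassmannianPerm S hS) := by
  by_contra hd
  have hempty : permDes n (grassmannianPerm S hS) = ∅ := by
    have := permDes_grassmannianPerm_subset S hS
    rw [subset_singleton_iff] at this
    exact this.resolve_right fun h => hd (h ▸ mem_singleton_self d)
  apply hne
  rw [← image_initialSegment_grassmannianPerm S hS, eq_one_of_permDes_eq_empty hempty]
  simp

end Grassmannian

section OneDescent

variable {n d : ℕ} {σ : Equiv.Perm (Fin n)}

lemma eq_grassmannianPerm_of_permDes_subset (h : permDes n σ ⊆ {d})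
    (hS : #((initialSegment n d).image σ) = d) : σ = grassmannianPerm _ hS := by
  have hd : d ≤ n := hS ▸ (card_le_univ _).trans_eq (Fintype.card_fin n)
  have hdes : ∀ t ∈ permDes n σ, t = d := fun t ht => mem_singleton.mp (h ht)
  have first := orderEmbOfFin_unique hS (f := fun k : Fin d => σ ⟨0 + k, by omega⟩)
    (fun k => mem_image_of_mem σ (by simp [initialSegment]))
    (strictMono_apply_add (by omega) fun t ht => by have := hdes t ht; omega)
  have second := orderEmbOfFin_unique (card_compl_of_card_eq hS)
    (f := fun k : Fin (n - d) => σ ⟨d + k, by omega⟩)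
    (fun k => by simp [initialSegment])
    (strictMono_apply_add (by omega) fun t ht => by have := hdes t ht; omega)
  ext i : 1
  rw [grassmannianPerm_apply, grassmannianFun]
  split_ifs with hi
  · rw [← first]
    simp
  · rw [← second]
    congr 1
    ext
    simp only
    omega

lemma image_initialSegment_ne_of_mem_permDes (h : d ∈ permDes n σ) :
    (initialSegment n d).image σ ≠ initialSegment n d := by
  obtain ⟨hd₁, hd₂⟩ := mem_Ico.mp (permDes_subset_Ico h)
  obtain ⟨i, rfl⟩ : ∃ i, d = i + 1 := ⟨d - 1, by omega⟩
  rw [succ_mem_permDes_iff hd₂] at h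
  intro himage
  have hlast : σ ⟨i, by omega⟩ ∈ initialSegment n (i + 1) :=
    himage ▸ mem_image_of_mem σ (by simp [initialSegment])
  have hnext : σ ⟨i + 1, hd₂⟩ ∉ initialSegment n (i + 1) :=
    himage ▸ by simp [σ.injective.mem_finset_image, initialSegment]
  simp only [initialSegment, mem_filter, mem_univ, true_and, not_lt] at hlast hnext
  exact h.not_ge (Fin.le_def.mpr (by omega))

theorem card_filter_permDes_eq_singleton (hd : d ≤ n) :
    #{σ : Equiv.Perm (Fin n) | permDes n σ = {d}} = n.choose d - 1 := by
  have hsubsets : #((powersetCard d univ).erase (initialSegment n d)) = n.choose d - 1 := by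
    rw [card_erase_of_mem (mem_powersetCard.mpr ⟨subset_univ _, card_initialSegment hd⟩),
      card_powersetCard, card_fin]
  have hcard : ∀ S ∈ (powersetCard d univ).erase (initialSegment n d), #S = d :=
    fun S hS => (mem_powersetCard.mp (mem_erase.mp hS).2).2
  rw [← hsubsets, eq_comm]
  refine card_bij (fun S hS => grassmannianPerm S (hcard S hS))
    (fun S hS => ?_) (fun S₁ hS₁ S₂ hS₂ h => ?_) (fun σ hσ => ?_)
  · obtain ⟨hne, hS⟩ := mem_erase.mp hS
    exact mem_filter.mpr ⟨mem_univ _, (permDes_grassmannianPerm_subset S _).antisymm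
      (singleton_subset_iff.mpr (mem_permDes_grassmannianPerm S _ hne))⟩
  · rw [← image_initialSegment_grassmannianPerm S₁ (hcard S₁ hS₁), h,
      image_initialSegment_grassmannianPerm]
  · have hσ : permDes n σ = {d} := (mem_filter.mp hσ).2
    have hS : #((initialSegment n d).image σ) = d := by
      rw [card_image_of_injective _ σ.injective, card_initialSegment hd]
    have hne := image_initialSegment_ne_of_mem_permDes (hσ ▸ mem_singleton_self d)
    refine ⟨_, mem_erase.mpr ⟨hne, mem_powersetCard.mpr ⟨subset_univ _, hS⟩⟩, ?_⟩
    exact (eq_grassmannianPerm_of_permDes_subset hσ.subset hS).symm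

theorem sum_filter_card_permDes_eq_one {M : Type*} [AddCommMonoid M] (f : ℕ → M) :
    ∑ σ : Equiv.Perm (Fin n) with #(permDes n σ) = 1, f (permMaj n σ) =
      ∑ d ∈ range (n + 1), #{σ : Equiv.Perm (Fin n) | permDes n σ = {d}} • f d := by
  have hmaps : ∀ σ ∈ ({σ | #(permDes n σ) = 1} : Finset (Equiv.Perm (Fin n))),
      permMaj n σ ∈ range (n + 1) := fun σ hσ => by
    have hmaj := mem_Ico.mp <| permDes_subset_Ico <|
      (permDes_eq_singleton_iff.mpr ⟨(mem_filter.mp hσ).2, rfl⟩).symm ▸ mem_singleton_self _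
    exact mem_range.mpr (by omega)
  rw [← sum_fiberwise_of_maps_to' hmaps]
  refine sum_congr rfl fun d _ => ?_
  simp only [sum_const, filter_filter, permDes_eq_singleton_iff]

end OneDescent

lemma sum_range_choose_sub_one_nsmul_pow {R : Type*} [CommRing R] (x : R) (n : ℕ) :
    ∑ d ∈ range (n + 1), (n.choose d - 1) • x ^ d =
      (1 + x) ^ n - ∑ j ∈ range (n + 1), x ^ j := by
  rw [add_comm 1 x, add_pow, eq_sub_iff_add_eq, ← sum_add_distrib]
  refine sum_congr rfl fun d hd => ?_
  rw [nsmul_eq_mul, Nat.cast_sub (Nat.choose_pos (mem_range_succ_iff.mp hd))]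
  ring

theorem A_one_descent_general (n : ℕ) :
    A n 1 = (1 + Polynomial.X) ^ n - ∑ j ∈ Finset.range (n + 1), Polynomial.X ^ j := by
  have hA : A n 1 = ∑ σ : Equiv.Perm (Fin n) with #(permDes n σ) = 1, X ^ permMaj n σ := by
    refine sum_congr (filter_congr fun σ _ => ?_) fun _ _ => rfl
    exact and_iff_right_of_imp fun h => avoids321_of_card_permDes_le_one h.le
  rw [hA, sum_filter_card_permDes_eq_one, ← sum_range_choose_sub_one_nsmul_pow (X : ℚ[X]) n]
  refine sum_congr rfl fun d hd => ?_
  rw [card_filter_permDes_eq_singleton (mem_range_succ_iff.mp hd)]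

/-- The major-index generating function for 321-avoiding permutations of length `n ≥ 1`
with exactly one descent is `(1+q)^n - (1 + q + q² + ⋯ + q^n)`. -/
theorem A_one_descent (n : ℕ) (hn : 1 ≤ n) :
    A n 1 = (1 + Polynomial.X) ^ n - ∑ j ∈ Finset.range (n + 1), Polynomial.X ^ j :=
  A_one_descent_general n
end

section
/- For n ≥ 1, the number of 132-avoiding permutations of length n with exactly one descent and major index i (for 1 ≤ i ≤ n-1) equals n - i. -/
/-!
A permutation whose only descent is at `i` is made of two increasing runs, positions `[0, i)`
and `[i, n)`. Avoiding 132 means that no value of the second run lies between the first and the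
last value of the first run, so the first run is a block of consecutive values `t, …, t + i - 1`.
The second run then lists the remaining values in increasing order, so the permutation is
determined by `t = σ 0`; the descent at `i` forces `t ≥ 1`, and `t + i ≤ n`. Hence the
permutations are counted by `t ∈ [1, n - i]`.
-/

open Finset Polynomial
open scoped Classical

theorem Finset.card_eq_one_and_sum_id_eq_iff {α : Type*} [AddCommMonoid α] {s : Finset α}
    {a : α} : #s = 1 ∧ s.sum id = a ↔ s = {a} := by
  constructor
  · rintro ⟨hcard, rfl⟩
    obtain ⟨b, rfl⟩ := card_eq_one.mp hcard
    simp
  · rintro rfl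
    simp

theorem Equiv.Perm.eq_of_strictMonoOn_of_eqOn_compl {α : Type*} [LinearOrder α]
    [WellFoundedLT α] {σ τ : Equiv.Perm α} {s : Set α} (hσ : StrictMonoOn σ s)
    (hτ : StrictMonoOn τ s) (h : Set.EqOn σ τ sᶜ) : σ = τ := by
  -- at a least disagreement `p` with `σ p < τ p`, the position `τ⁻¹ (σ p)` has nowhere to go
  have key : ∀ {σ τ : Equiv.Perm α}, StrictMonoOn τ s → Set.EqOn σ τ sᶜ →
      ∀ p, (∀ q < p, σ q = τ q) → ¬ σ p < τ p := by
    intro σ τ hτ h p hbelow hlt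
    have hp : p ∈ s := by_contra fun hp => hlt.ne (h hp)
    obtain ⟨q, hq⟩ := τ.surjective (σ p)
    rcases lt_trichotomy q p with hqp | rfl | hpq
    · exact hqp.ne (σ.injective ((hbelow q hqp).trans hq))
    · exact hlt.ne' hq
    · by_cases hqs : q ∈ s
      · exact (hτ hp hqs hpq).not_gt (hq ▸ hlt)
      · exact hpq.ne' (σ.injective ((h hqs).trans hq))
  ext p
  induction p using WellFoundedLT.induction with
  | ind p ih =>
    rcases lt_trichotomy (σ p) (τ p) with hlt | heq | hgt
    · exact absurd hlt (key hτ h p ih)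
    · exact heq
    · exact absurd hgt (key hσ h.symm p fun q hq => (ih q hq).symm)

theorem Fin.val_sub_val_le_of_strictMonoOn_Icc {n m : ℕ} {f : Fin n → Fin m} {p q : Fin n}
    (hf : StrictMonoOn f (Set.Icc p q)) (hpq : p ≤ q) : q.val - p.val ≤ (f q).val - (f p).val := by
  have hmaps : Set.MapsTo f (Icc p q) (Icc (f p) (f q)) := fun x hx => by
    rw [coe_Icc] at hx
    exact mem_Icc.mpr ⟨hf.monotoneOn ⟨le_rfl, hpq⟩ hx hx.1,
      hf.monotoneOn hx ⟨hpq, le_rfl⟩ hx.2⟩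
  have := card_le_card_of_injOn f hmaps (by rw [coe_Icc]; exact hf.injOn)
  simp only [Fin.card_Icc] at this
  omega

section Permutations

variable {n : ℕ} {σ : Equiv.Perm (Fin n)}

theorem mem_permDes {d : ℕ} :
    d ∈ permDes n σ ↔ ∃ hd : d < n, 1 ≤ d ∧ σ ⟨d, hd⟩ < σ ⟨d - 1, by omega⟩ := by
  simp only [permDes, mem_filter, mem_Ico]
  exact ⟨fun ⟨⟨h1, hd⟩, h⟩ => ⟨hd, h1, h hd⟩, fun ⟨hd, h1, h⟩ => ⟨⟨h1, hd⟩, fun _ => h⟩⟩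

theorem apply_lt_apply_of_forall_notMem_permDes_s15 {p q : Fin n} (hpq : p < q)
    (h : ∀ d, p.val < d → d ≤ q.val → d ∉ permDes n σ) : σ p < σ q := by
  obtain ⟨q, hq⟩ := q
  induction q with
  | zero => exact absurd (Fin.lt_def.mp hpq) (Nat.not_lt_zero _)
  | succ q ih =>
    have hascent : σ ⟨q, by omega⟩ < σ ⟨q + 1, hq⟩ := by
      have hnotMem := h (q + 1) hpq le_rfl
      simp only [mem_permDes, not_exists, not_and, not_lt] at hnotMem
      exact (hnotMem hq (by omega)).lt_of_ne (σ.injective.ne (by simp))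
    have hpq' : p.val < q + 1 := hpq
    by_cases hpq_eq : p.val = q
    · convert hascent
    · exact (ih (by omega) (Fin.mk_lt_mk.mpr (by omega))
        fun d h1 h2 => h d h1 (by simp only at h2 ⊢; omega)).trans hascent

theorem val_apply_eq_of_avoids132 [NeZero n] (hσ : Avoids132 σ) {m : Fin n}
    (hmono : StrictMonoOn σ (Set.Iic m)) {p : Fin n} (hp : p ≤ m) :
    (σ p).val = (σ 0).val + p.val := by
  have hlow := Fin.val_sub_val_le_of_strictMonoOn_Icc (hmono.mono fun x hx => hx.2.trans hp)
    (Fin.zero_le p)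
  have hhigh := Fin.val_sub_val_le_of_strictMonoOn_Icc (hmono.mono Set.Icc_subset_Iic_self) hp
  -- avoiding 132, no later position can take a value strictly between `σ 0` and `σ m`
  have hmaps : Set.MapsTo σ.symm (Icc (σ 0) (σ m)) (Iic m) := by
    intro v hv
    obtain ⟨q, rfl⟩ := σ.surjective v
    rw [coe_Icc] at hv
    simp only [coe_Iic, Set.mem_Iic, Equiv.symm_apply_apply]
    by_contra! hmq
    have h0q : σ 0 ≠ σ q := σ.injective.ne (Fin.zero_le m |>.trans_lt hmq).ne
    have hqm : σ q ≠ σ m := σ.injective.ne hmq.ne'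
    have h0m : 0 < m := (Fin.zero_le m).lt_of_ne fun h0m => h0q (le_antisymm hv.1 (h0m ▸ hv.2))
    exact hσ ⟨0, m, q, h0m, hmq, hv.1.lt_of_ne h0q, hv.2.lt_of_ne hqm⟩
  have hcount := card_le_card_of_injOn σ.symm hmaps σ.symm.injective.injOn
  have h0p : σ 0 ≤ σ p := hmono.monotoneOn (Fin.zero_le m) hp (Fin.zero_le p)
  have hpm : σ p ≤ σ m := hmono.monotoneOn hp (Set.mem_Iic.mpr le_rfl) hp
  simp only [Fin.card_Icc, Fin.card_Iic, Fin.le_def, Fin.val_zero] at *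
  omega

end Permutations

def blockSwapFun (i t p : ℕ) : ℕ := if p < i then p + t else if p < i + t then p - i else p

/-- In one-line notation (values from `0`) this is `t, …, t + i - 1, 0, …, t - 1, i + t, …, n - 1`;
it is the identity when `n < i + t`. -/
noncomputable def blockSwap (n i t : ℕ) : Equiv.Perm (Fin n) :=
  if h : i + t ≤ n then
    Equiv.ofBijective
      (fun p => ⟨blockSwapFun i t p, by have := p.2; unfold blockSwapFun; split_ifs <;> omega⟩)
      (Finite.injective_iff_bijective.mp fun p q hpq => by
        simp only [Fin.mk.injEq, blockSwapFun] at hpq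
        ext
        split_ifs at hpq <;> omega)
  else 1

section BlockSwap

variable {n i t : ℕ}

theorem val_blockSwap_apply (h : i + t ≤ n) (p : Fin n) :
    (blockSwap n i t p).val = blockSwapFun i t p := by
  simp [blockSwap, h]

theorem avoids132_blockSwap (h : i + t ≤ n) : Avoids132 (blockSwap n i t) := by
  rintro ⟨a, b, c, hab, hbc, hac, hcb⟩
  simp only [Fin.lt_def, val_blockSwap_apply h, blockSwapFun] at hab hbc hac hcb
  split_ifs at hac hcb <;> omega

theorem permDes_blockSwap (hi : 1 ≤ i) (ht : 1 ≤ t) (h : i + t ≤ n) :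
    permDes n (blockSwap n i t) = {i} := by
  ext d
  simp only [mem_permDes, Fin.lt_def, val_blockSwap_apply h, blockSwapFun, mem_singleton]
  constructor
  · rintro ⟨hd, hd1, hdes⟩
    split_ifs at hdes <;> omega
  · rintro rfl
    refine ⟨by omega, hi, ?_⟩
    split_ifs <;> omega

theorem strictMonoOn_blockSwap (h : i + t ≤ n) :
    StrictMonoOn (blockSwap n i t) {p | i ≤ p.val} := by
  intro p hp q hq hpq
  simp only [Set.mem_ofPred_eq] at hp hq
  simp only [Fin.lt_def, val_blockSwap_apply h, blockSwapFun] at hpq ⊢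
  split_ifs <;> omega

theorem blockSwap_injOn (hi : 1 ≤ i) : Set.InjOn (blockSwap n i) (Icc 1 (n - i)) := by
  intro t₁ ht₁ t₂ ht₂ heq
  simp only [coe_Icc, Set.mem_Icc] at ht₁ ht₂
  have hval := congrArg (fun σ : Equiv.Perm (Fin n) => (σ ⟨0, by omega⟩).val) heq
  simp only [val_blockSwap_apply (show i + t₁ ≤ n by omega),
    val_blockSwap_apply (show i + t₂ ≤ n by omega), blockSwapFun] at hval
  split_ifs at hval <;> omega

end BlockSwap

theorem exists_blockSwap_eq_of_avoids132 {n i : ℕ} {σ : Equiv.Perm (Fin n)} (hi : 1 ≤ i)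
    (hσ : Avoids132 σ) (hdes : permDes n σ = {i}) :
    ∃ t, 1 ≤ t ∧ i + t ≤ n ∧ blockSwap n i t = σ := by
  obtain ⟨hin, -, hdescent⟩ := mem_permDes.mp (hdes ▸ mem_singleton_self i)
  have : NeZero n := ⟨by omega⟩
  have hrun : ∀ p q : Fin n, p < q → q.val < i ∨ i ≤ p.val → σ p < σ q := fun p q hpq hpq' =>
    apply_lt_apply_of_forall_notMem_permDes_s15 hpq fun d h1 h2 => by
      rw [hdes, mem_singleton]; omega
  set m : Fin n := ⟨i - 1, by omega⟩
  have hm : m.val = i - 1 := rfl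
  have hfirst : ∀ p : Fin n, p.val < i → (σ p).val = (σ 0).val + p.val := fun p hp =>
    val_apply_eq_of_avoids132 hσ (m := m)
      (fun a _ b hb hab => hrun a b hab (Or.inl (by rw [Set.mem_Iic, Fin.le_def] at hb; omega)))
      (Fin.le_def.mpr (by omega))
  have ht : 1 ≤ (σ 0).val := by
    by_contra! ht
    -- then `σ` fixes `[0, i)`, so the value `σ i < i - 1` would be taken twice
    obtain ⟨v, hv⟩ : ∃ v, σ ⟨i, hin⟩ = v := ⟨_, rfl⟩
    have hvi : v.val < i - 1 := by
      rw [hv, Fin.lt_def, hfirst m (by omega)] at hdescent; omega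
    have hfix : σ v = σ ⟨i, hin⟩ := by
      rw [hv]; exact Fin.ext (by rw [hfirst v (by omega)]; omega)
    have := congrArg Fin.val (σ.injective hfix)
    simp only at this
    omega
  have hlast := hfirst m (by omega)
  refine ⟨(σ 0).val, ht, by omega, Equiv.Perm.eq_of_strictMonoOn_of_eqOn_compl
    (strictMonoOn_blockSwap (by omega)) (fun p hp q _ hpq => hrun p q hpq (Or.inr hp))
    fun p hp => Fin.ext ?_⟩
  rw [Set.mem_compl_iff, Set.mem_ofPred_eq, not_le] at hp
  rw [val_blockSwap_apply (by omega), hfirst p hp, blockSwapFun, if_pos hp, add_comm]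

theorem avoids132_and_permDes_eq_singleton_iff {n i : ℕ} {σ : Equiv.Perm (Fin n)} (hi : 1 ≤ i) :
    Avoids132 σ ∧ permDes n σ = {i} ↔ ∃ t ∈ Icc 1 (n - i), blockSwap n i t = σ := by
  constructor
  · rintro ⟨hσ, hdes⟩
    obtain ⟨t, ht, hle, rfl⟩ := exists_blockSwap_eq_of_avoids132 hi hσ hdes
    exact ⟨t, mem_Icc.mpr ⟨ht, by omega⟩, rfl⟩
  · rintro ⟨t, ht, rfl⟩
    rw [mem_Icc] at ht
    exact ⟨avoids132_blockSwap (by omega), permDes_blockSwap hi ht.1 (by omega)⟩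

theorem count_132_one_descent_general (n i : ℕ) (hi : 1 ≤ i) :
    (Finset.univ.filter
        (fun σ : Equiv.Perm (Fin n) =>
          Avoids132 σ ∧ (permDes n σ).card = 1 ∧ permMaj n σ = i)).card = n - i := by
  have hset : univ.filter (fun σ : Equiv.Perm (Fin n) =>
      Avoids132 σ ∧ (permDes n σ).card = 1 ∧ permMaj n σ = i) =
      (Icc 1 (n - i)).image (blockSwap n i) := by
    ext σ
    simp only [mem_filter, mem_univ, true_and, mem_image, permMaj,
      card_eq_one_and_sum_id_eq_iff, avoids132_and_permDes_eq_singleton_iff hi]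
  rw [hset, card_image_of_injOn (blockSwap_injOn hi), Nat.card_Icc, Nat.add_sub_cancel]

/-- The number of 132-avoiding permutations of length `n ≥ 1` with exactly one descent
and major index `i` (for `1 ≤ i ≤ n-1`) is `n - i`. -/
theorem count_132_one_descent (n i : ℕ) (hn : 1 ≤ n) (hi : 1 ≤ i) (hi' : i ≤ n - 1) :
    (Finset.univ.filter
        (fun σ : Equiv.Perm (Fin n) =>
          Avoids132 σ ∧ (permDes n σ).card = 1 ∧ permMaj n σ = i)).card = n - i :=
  count_132_one_descent_general n i hi
end

section
/- There is a bijection between 132-avoiding permutations and 231-avoiding permutations of length n preserving the descent set; consequently Σ q^{maj(σ)} t^{des(σ)} over S_n(132) equals the same sum over S_n(231). -/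
open Finset Polynomial
open scoped Classical

/-- The bivariate generating function `∑ q^{maj σ} t^{des σ}` over permutations of length
`n` satisfying `P`, as a polynomial in `t` with coefficients polynomials in `q`. -/
noncomputable def bivarGF (n : ℕ) (P : Equiv.Perm (Fin n) → Prop) :
    Polynomial (Polynomial ℚ) :=
  (Finset.univ.filter P).sum
    (fun σ => Polynomial.C (Polynomial.X ^ permMaj n σ)
      * Polynomial.X ^ (permDes n σ).card)

/-!
Write a permutation with maximum `m` as `α m β`. It avoids 231 iff `α < β` entrywise and both
avoid 231, and it avoids 132 iff `α > β` entrywise and both avoid 132 (the mirror image of the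
231 case). Either way the permutation is determined by the shape of its decreasing binary tree
(root `m`, subtrees built from `α` and `β`), and every shape occurs exactly once. The descent
word of `α m β` is that of `α`, an ascent into `m` unless `α` is empty, a descent out of `m`
unless `β` is empty, then that of `β`; so it depends only on the shape. Matching the 132- and
231-avoiders of equal shape therefore preserves descent sets, hence `des` and `maj`.
-/

namespace List

def descentWord (l : List ℕ) : List Bool :=
  zipWith (fun a b => decide (b < a)) l l.tail

lemma length_descentWord (l : List ℕ) : l.descentWord.length = l.length - 1 := by
  simp [descentWord]

lemma getElem_descentWord {l : List ℕ} {i : ℕ} (h : i + 1 < l.length) :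
    l.descentWord[i]'(by rw [length_descentWord]; omega) = decide (l[i + 1] < l[i]) := by
  simp [descentWord]

lemma descentWord_map {f : ℕ → ℕ} (hf : StrictMono f) (l : List ℕ) :
    (l.map f).descentWord = l.descentWord := by
  rw [descentWord, descentWord, ← map_tail, zipWith_map]
  simp only [hf.lt_iff_lt]

lemma descentWord_cons_cons (a b : ℕ) (l : List ℕ) :
    (a :: b :: l).descentWord = decide (b < a) :: (b :: l).descentWord := rfl

lemma descentWord_append_cons (x y : List ℕ) (m : ℕ) :
    (x ++ m :: y).descentWord = (x ++ [m]).descentWord ++ (m :: y).descentWord := by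
  induction x with
  | nil => rfl
  | cons a x ih =>
    cases x with
    | nil => rfl
    | cons b x => simpa [descentWord_cons_cons] using ih

lemma descentWord_append_singleton_of_lt {x : List ℕ} {m : ℕ} (hx : ∀ a ∈ x, a < m) :
    (x ++ [m]).descentWord = x.descentWord ++ replicate (min x.length 1) false := by
  induction x with
  | nil => rfl
  | cons a x ih =>
    cases x with
    | nil => simp [descentWord, (hx a (by simp)).le]
    | cons b x =>
      simp only [forall_mem_cons] at hx ih
      rw [cons_append, cons_append, descentWord_cons_cons, ← cons_append, ih hx.2,
        descentWord_cons_cons]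
      simp

lemma descentWord_cons_of_lt {y : List ℕ} {m : ℕ} (hy : ∀ b ∈ y, b < m) :
    (m :: y).descentWord = replicate (min y.length 1) true ++ y.descentWord := by
  cases y with
  | nil => rfl
  | cons b y => simp [descentWord_cons_cons, hy b (by simp)]

lemma descentWord_append_cons_of_lt {x y : List ℕ} {m : ℕ} (hx : ∀ a ∈ x, a < m)
    (hy : ∀ b ∈ y, b < m) :
    (x ++ m :: y).descentWord = x.descentWord ++ replicate (min x.length 1) false ++
      (replicate (min y.length 1) true ++ y.descentWord) := by
  rw [descentWord_append_cons, descentWord_append_singleton_of_lt hx, descentWord_cons_of_lt hy]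

lemma sublist_ofFn_iff {α : Type*} {n : ℕ} {f : Fin n → α} {l : List α} :
    l <+ ofFn f ↔ ∃ is : List (Fin n), is.Pairwise (· < ·) ∧ l = is.map f := by
  rw [ofFn_eq_map, sublist_map_iff]
  refine exists_congr fun is => and_congr_left fun _ =>
    ⟨fun h => (pairwise_lt_finRange n).sublist h, fun h => sublist_of_subperm_of_pairwise
      (subperm_of_subset h.nodup fun i _ => mem_finRange i) h (pairwise_lt_finRange n)⟩

lemma triple_sublist_ofFn_iff {α : Type*} {n : ℕ} {f : Fin n → α} {a b c : α} :
    [a, b, c] <+ ofFn f ↔ ∃ i j k, i < j ∧ j < k ∧ f i = a ∧ f j = b ∧ f k = c := by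
  rw [sublist_ofFn_iff]
  constructor
  · rintro ⟨is, hp, h⟩
    obtain ⟨i, j, k, rfl⟩ : ∃ i j k, is = [i, j, k] := by
      match is, h with
      | [i, j, k], _ => exact ⟨i, j, k, rfl⟩
    simp only [pairwise_cons, mem_cons, not_mem_nil, or_false, forall_eq_or_imp, forall_eq,
      IsEmpty.forall_iff, implies_true, Pairwise.nil, and_self, and_true, map_cons, map_nil,
      cons.injEq] at hp h
    exact ⟨i, j, k, hp.1.1, hp.2, h.1.symm, h.2.1.symm, h.2.2.symm⟩
  · rintro ⟨i, j, k, hij, hjk, rfl, rfl, rfl⟩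
    exact ⟨[i, j, k], by simp [hij, hjk, hij.trans hjk], rfl⟩

def Avoids231 (l : List ℕ) : Prop := ∀ a b c, [a, b, c] <+ l → ¬ (c < a ∧ a < b)

def Avoids132 (l : List ℕ) : Prop := ∀ a b c, [a, b, c] <+ l → ¬ (a < c ∧ c < b)

lemma avoids231_reverse {l : List ℕ} : l.reverse.Avoids231 ↔ l.Avoids132 := by
  constructor
  · intro h a b c hs hp
    exact h c b a (by simpa using reverse_sublist.2 hs) hp
  · intro h a b c hs hp
    exact h c b a (by simpa using reverse_sublist.2 hs) hp

lemma Avoids231.sublist {l l' : List ℕ} (h : l.Avoids231) (hs : l' <+ l) : l'.Avoids231 :=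
  fun a b c h' => h a b c (h'.trans hs)

lemma avoids231_map_iff {f : ℕ → ℕ} (hf : StrictMono f) {l : List ℕ} :
    (l.map f).Avoids231 ↔ l.Avoids231 := by
  constructor
  · intro h a b c hs hp
    exact h (f a) (f b) (f c) (hs.map f) ⟨hf hp.1, hf hp.2⟩
  · intro h a b c hs hp
    obtain ⟨l', hl', hmap⟩ := sublist_map_iff.1 hs
    obtain ⟨a', b', c', rfl⟩ : ∃ a' b' c', l' = [a', b', c'] := by
      match l', hmap with
      | [a', b', c'], _ => exact ⟨a', b', c', rfl⟩
    simp only [map_cons, map_nil, cons.injEq, and_true] at hmap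
    obtain ⟨rfl, rfl, rfl⟩ := hmap
    exact h a' b' c' hl' ⟨hf.lt_iff_lt.1 hp.1, hf.lt_iff_lt.1 hp.2⟩

lemma avoids231_append_cons_iff {x y : List ℕ} {m : ℕ} (hx : ∀ a ∈ x, a < m)
    (hy : ∀ b ∈ y, b < m) :
    (x ++ m :: y).Avoids231 ↔ (∀ a ∈ x, ∀ b ∈ y, a ≤ b) ∧ x.Avoids231 ∧ y.Avoids231 := by
  refine ⟨fun h => ⟨fun a ha b hb => ?_, h.sublist (sublist_append_left x _),
    h.sublist ((sublist_cons_self m y).trans (sublist_append_right x _))⟩, ?_⟩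
  · by_contra hba
    exact h a m b ((singleton_sublist.2 ha).append (cons_sublist_cons.2
      (singleton_sublist.2 hb))) ⟨not_le.1 hba, hx a ha⟩
  · rintro ⟨hxy, hxa, hya⟩ a b c hs ⟨hca, hab⟩
    obtain ⟨l₁, l₂, hl, h₁, h₂⟩ := sublist_append_iff.1 hs
    rcases l₁ with _ | ⟨a₁, _ | ⟨b₁, _ | ⟨c₁, _ | ⟨d₁, l₁⟩⟩⟩⟩ <;>
      simp only [nil_append, cons_append, cons.injEq, reduceCtorEq, and_false]
        at hl
    · subst hl
      rcases sublist_cons_iff.1 h₂ with h₂ | ⟨r, hr, h₂⟩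
      · exact hya a b c h₂ ⟨hca, hab⟩
      · obtain ⟨rfl, rfl⟩ := cons.inj hr
        exact absurd (hy b (h₂.subset (by simp))) (not_lt.2 hab.le)
    · obtain ⟨rfl, rfl⟩ := hl
      have hc : c ∈ y := singleton_sublist.1 h₂.tail
      exact absurd (hxy a (singleton_sublist.1 h₁) c hc) (not_le.2 hca)
    · obtain ⟨rfl, rfl, rfl⟩ := hl
      have ha : a ∈ x := h₁.subset (by simp)
      rcases mem_cons.1 (singleton_sublist.1 h₂) with rfl | hc
      · exact absurd (hca.trans (hx a ha)) (lt_irrefl c)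
      · exact absurd (hxy a ha c hc) (not_le.2 hca)
    · obtain ⟨rfl, rfl, rfl, rfl⟩ := hl
      exact hxa a b c h₁ ⟨hca, hab⟩

lemma perm_range_of_append_of_le {x y : List ℕ}
    (h : (x ++ y) ~ range (x.length + y.length)) (hxy : ∀ a ∈ x, ∀ b ∈ y, a ≤ b) :
    x ~ range x.length ∧ y ~ (range y.length).map (x.length + ·) := by
  obtain ⟨hxnd, -, hdisj⟩ := nodup_append.1 (h.nodup_iff.2 nodup_range)
  have hlt : ∀ a ∈ x, a < x.length := by
    intro a ha
    by_contra! hle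
    -- then `0, …, a` all lie in `x`, which has only `x.length ≤ a` entries
    have hsub : Finset.range (a + 1) ⊆ x.toFinset := by
      intro v hv
      have hvN : v < x.length + y.length :=
        lt_of_le_of_lt (Finset.mem_range_succ_iff.1 hv) (mem_range.1 (h.subset (by simp [ha])))
      rcases mem_append.1 (h.mem_iff.2 (mem_range.2 hvN)) with hvx | hvy
      · exact mem_toFinset.2 hvx
      · exact absurd (le_antisymm (hxy a ha v hvy) (Finset.mem_range_succ_iff.1 hv))
          (hdisj a ha v hvy)
    have := (Finset.card_le_card hsub).trans (toFinset_card_le x)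
    simp only [Finset.card_range] at this
    omega
  have hx : x ~ range x.length :=
    (subperm_of_subset hxnd fun a ha => mem_range.2 (hlt a ha)).perm_of_length_le (by simp)
  refine ⟨hx, (perm_append_left_iff (range x.length)).1 ?_⟩
  rw [← range_add]
  exact (hx.append_right y).symm.trans h

lemma Perm.exists_map_add_eq {y : List ℕ} {c k : ℕ} (h : y ~ (range k).map (c + ·)) :
    ∃ y' : List ℕ, y'.map (c + ·) = y ∧ y' ~ range k := by
  refine ⟨y.map (· - c), ?_, by simpa [Function.comp_def] using h.map (· - c)⟩
  rw [map_map]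
  conv_rhs => rw [← map_id y]
  refine map_congr_left fun v hv => ?_
  obtain ⟨w, -, rfl⟩ := mem_map.1 (h.subset hv)
  simp

end List

namespace BinaryTree

def mirror {α : Type*} : BinaryTree α → BinaryTree α
  | nil => nil
  | node a l r => node a r.mirror l.mirror

@[simp]
lemma numNodes_mirror {α : Type*} (t : BinaryTree α) : t.mirror.numNodes = t.numNodes := by
  induction t with
  | nil => rfl
  | node _ l r ihl ihr => simp [mirror, ihl, ihr, Nat.add_comm l.numNodes]

@[simp]
lemma mirror_mirror {α : Type*} (t : BinaryTree α) : t.mirror.mirror = t := by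
  induction t with
  | nil => rfl
  | node _ l r ihl ihr => simp [mirror, ihl, ihr]

/-- The one-line notation, with values `0, …, t.numNodes - 1`, of the 231-avoiding permutation
whose decreasing binary tree has shape `t`: the left subtree carries the smaller values. -/
def inorder231 : BinaryTree Unit → List ℕ
  | nil => []
  | node _ l r =>
    l.inorder231 ++ (l.numNodes + r.numNodes) :: r.inorder231.map (l.numNodes + ·)

/-- As `inorder231`, but the left subtree carries the larger values: a 132-avoiding
permutation. -/
def inorder132 : BinaryTree Unit → List ℕ
  | nil => []
  | node _ l r =>
    l.inorder132.map (r.numNodes + ·) ++ (l.numNodes + r.numNodes) :: r.inorder132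

lemma inorder231_perm_range (t : BinaryTree Unit) :
    t.inorder231.Perm (List.range t.numNodes) := by
  induction t with
  | nil => rfl
  | node _ l r ihl ihr =>
    rw [inorder231, numNodes, List.range_succ, List.range_add, List.append_assoc]
    exact ihl.append ((List.perm_append_singleton _ _).symm.trans ((ihr.map _).append_right _))

@[simp]
lemma length_inorder231 (t : BinaryTree Unit) : t.inorder231.length = t.numNodes := by
  simpa using t.inorder231_perm_range.length_eq

@[simp]
lemma mem_inorder231 {t : BinaryTree Unit} {v : ℕ} : v ∈ t.inorder231 ↔ v < t.numNodes := by
  simpa using t.inorder231_perm_range.mem_iff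

lemma avoids231_inorder231 (t : BinaryTree Unit) : t.inorder231.Avoids231 := by
  induction t with
  | nil => intro a b c h; simp [inorder231] at h
  | node _ l r ihl ihr =>
    rw [inorder231, List.avoids231_append_cons_iff (by simp; omega) (by simp),
      List.avoids231_map_iff add_right_strictMono]
    exact ⟨by simp; omega, ihl, ihr⟩

lemma inorder231_injective : Function.Injective inorder231 := by
  intro t t' h
  induction t generalizing t' with
  | nil => cases t' with
    | nil => rfl
    | node _ l' r' => simp [inorder231] at h
  | node _ l r ihl ihr =>
    cases t' with
    | nil => simp [inorder231] at h
    | node _ l' r' =>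
      have hn : l.numNodes + r.numNodes = l'.numNodes + r'.numNodes := by
        simpa using congrArg List.length h
      rw [inorder231, inorder231, ← hn, List.append_cons_inj_of_notMem (by simp)
        (by simp)] at h
      obtain ⟨hl, -, hr⟩ := h
      obtain rfl := ihl hl
      obtain rfl := ihr (List.map_injective_iff.2 (add_right_injective _) hr)
      rfl

lemma exists_inorder231_eq {l : List ℕ} (hl : l.Perm (List.range l.length))
    (ha : l.Avoids231) : ∃ t : BinaryTree Unit, t.inorder231 = l := by
  induction hn : l.length using Nat.strong_induction_on generalizing l with
  | _ n ih =>
  rcases n with _ | n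
  · exact ⟨nil, (List.length_eq_zero_iff.1 hn).symm⟩
  obtain ⟨x, y, rfl⟩ := List.append_of_mem (a := n) (hl.mem_iff.2 (by simp [hn]))
  have hlen : x.length + y.length = n := by
    simp only [List.length_append, List.length_cons] at hn; omega
  have hperm : (x ++ y).Perm (List.range (x.length + y.length)) := by
    rw [hlen, ← List.perm_cons n]
    refine List.perm_middle.symm.trans (hl.trans ?_)
    rw [hn, List.range_succ]
    exact List.perm_append_singleton _ _
  have hbound : ∀ a ∈ x ++ y, a < n := fun a ha => hlen ▸ List.mem_range.1 (hperm.subset ha)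
  obtain ⟨hxy, hxa, hya⟩ :=
    (List.avoids231_append_cons_iff (fun a ha => hbound a (by simp [ha]))
      (fun b hb => hbound b (by simp [hb]))).1 ha
  obtain ⟨hxp, hyp⟩ := List.perm_range_of_append_of_le hperm hxy
  obtain ⟨y', rfl, hy'⟩ := hyp.exists_map_add_eq
  obtain ⟨tl, rfl⟩ := ih x.length (by omega) hxp hxa rfl
  obtain ⟨tr, rfl⟩ := ih y'.length (by simp only [List.length_map] at hlen; omega) (by simpa using hy')
    ((List.avoids231_map_iff add_right_strictMono).1 hya) rfl
  exact ⟨node () tl tr, by simpa [inorder231] using hlen⟩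

lemma inorder132_eq_reverse_inorder231_mirror (t : BinaryTree Unit) :
    t.inorder132 = t.mirror.inorder231.reverse := by
  induction t with
  | nil => rfl
  | node _ l r ihl ihr =>
    simp [inorder132, inorder231, mirror, ihl, ihr, List.map_reverse, Nat.add_comm]

@[simp]
lemma mem_inorder132 {t : BinaryTree Unit} {v : ℕ} : v ∈ t.inorder132 ↔ v < t.numNodes := by
  simp [inorder132_eq_reverse_inorder231_mirror]

@[simp]
lemma length_inorder132 (t : BinaryTree Unit) : t.inorder132.length = t.numNodes := by
  simp [inorder132_eq_reverse_inorder231_mirror]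

lemma inorder132_injective : Function.Injective inorder132 := by
  intro t t' h
  simp only [inorder132_eq_reverse_inorder231_mirror, List.reverse_inj] at h
  simpa using congrArg mirror (inorder231_injective h)

lemma descentWord_inorder132 (t : BinaryTree Unit) :
    t.inorder132.descentWord = t.inorder231.descentWord := by
  induction t with
  | nil => rfl
  | node _ l r ihl ihr =>
    rw [inorder132, inorder231, List.descentWord_append_cons_of_lt (by simp; omega)
      (by simp; omega), List.descentWord_append_cons_of_lt (by simp; omega) (by simp),
      List.descentWord_map add_right_strictMono, List.descentWord_map add_right_strictMono]
    simp [ihl, ihr]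

lemma range_inorder231 (n : ℕ) :
    Set.range (fun t : {t : BinaryTree Unit // t.numNodes = n} => t.1.inorder231) =
      {l | l.Perm (List.range n) ∧ l.Avoids231} := by
  ext l
  constructor
  · rintro ⟨⟨t, rfl⟩, rfl⟩
    exact ⟨t.inorder231_perm_range, t.avoids231_inorder231⟩
  · rintro ⟨hp, ha⟩
    obtain ⟨t, rfl⟩ := exists_inorder231_eq (by rwa [hp.length_eq, List.length_range]) ha
    exact ⟨⟨t, by simpa using hp.length_eq⟩, rfl⟩

lemma range_inorder132 (n : ℕ) :
    Set.range (fun t : {t : BinaryTree Unit // t.numNodes = n} => t.1.inorder132) =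
      {l | l.Perm (List.range n) ∧ l.Avoids132} := by
  ext l
  constructor
  · rintro ⟨⟨t, rfl⟩, rfl⟩
    simp only [Set.mem_ofPred_eq, inorder132_eq_reverse_inorder231_mirror,
      ← List.avoids231_reverse, List.reverse_reverse]
    exact ⟨(List.reverse_perm _).trans (by simpa using t.mirror.inorder231_perm_range),
      t.mirror.avoids231_inorder231⟩
  · rintro ⟨hp, ha⟩
    have : l.reverse ∈ Set.range (fun t : {t : BinaryTree Unit // t.numNodes = n} =>
        t.1.inorder231) :=
      range_inorder231 n ▸ ⟨(List.reverse_perm l).trans hp, List.avoids231_reverse.2 ha⟩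
    obtain ⟨⟨t, rfl⟩, ht⟩ := this
    exact ⟨⟨t.mirror, by simp⟩, by simp [inorder132_eq_reverse_inorder231_mirror, ht]⟩

end BinaryTree

lemma exists_equiv_of_range_eq {α β γ : Type*} {f : α → γ} {g : β → γ}
    (hf : Function.Injective f) (hg : Function.Injective g) (h : Set.range f = Set.range g) :
    ∃ e : α ≃ β, ∀ a, g (e a) = f a :=
  ⟨(Equiv.ofInjective f hf).trans ((Equiv.setCongr h).trans (Equiv.ofInjective g hg).symm),
    fun _ => Equiv.apply_ofInjective_symm hg _⟩

namespace Equiv.Perm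

variable {n : ℕ}

def oneLine (σ : Perm (Fin n)) : List ℕ := List.ofFn fun i => (σ i : ℕ)

lemma oneLine_injective : Function.Injective (oneLine (n := n)) := fun _ _ h =>
  Equiv.ext fun i => Fin.ext (congrFun (List.ofFn_injective h) i)

lemma range_oneLine : Set.range (oneLine (n := n)) = {l | l.Perm (List.range n)} := by
  ext l
  constructor
  · rintro ⟨σ, rfl⟩
    refine (List.subperm_of_subset (List.nodup_ofFn.2 (Fin.val_injective.comp σ.injective))
      fun v hv => ?_).perm_of_length_le (by simp)
    obtain ⟨i, rfl⟩ := List.mem_ofFn.1 hv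
    exact List.mem_range.2 (σ i).2
  · intro hl
    have hlen : l.length = n := by simpa using hl.length_eq
    have hnd : l.Nodup := hl.nodup_iff.2 List.nodup_range
    let f : Fin n → Fin n := fun i =>
      ⟨l[i.1], List.mem_range.1 (hl.subset (List.getElem_mem _))⟩
    have hf : Function.Injective f := fun i j h =>
      Fin.ext (hnd.getElem_inj_iff.1 (Fin.val_eq_of_eq h))
    refine ⟨Equiv.ofBijective f (Finite.injective_iff_bijective.1 hf), ?_⟩
    exact List.ext_getElem (by simp [oneLine, hlen]) fun i _ _ => by simp [oneLine, f]

lemma avoids231_iff_oneLine (σ : Perm (Fin n)) : Avoids231 σ ↔ (oneLine σ).Avoids231 := by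
  simp only [Avoids231, List.Avoids231, oneLine, List.triple_sublist_ofFn_iff]
  constructor
  · rintro h _ _ _ ⟨i, j, k, hij, hjk, rfl, rfl, rfl⟩ hp
    exact h ⟨i, j, k, hij, hjk, hp⟩
  · rintro h ⟨i, j, k, hij, hjk, hp⟩
    exact h _ _ _ ⟨i, j, k, hij, hjk, rfl, rfl, rfl⟩ hp

lemma avoids132_iff_oneLine (σ : Perm (Fin n)) : Avoids132 σ ↔ (oneLine σ).Avoids132 := by
  simp only [Avoids132, List.Avoids132, oneLine, List.triple_sublist_ofFn_iff]
  constructor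
  · rintro h _ _ _ ⟨i, j, k, hij, hjk, rfl, rfl, rfl⟩ hp
    exact h ⟨i, j, k, hij, hjk, hp⟩
  · rintro h ⟨i, j, k, hij, hjk, hp⟩
    exact h _ _ _ ⟨i, j, k, hij, hjk, rfl, rfl, rfl⟩ hp

lemma permDes_eq_of_descentWord_eq {σ τ : Perm (Fin n)}
    (h : (oneLine σ).descentWord = (oneLine τ).descentWord) : permDes n σ = permDes n τ := by
  ext i
  simp only [permDes, Finset.mem_filter, Finset.mem_Ico]
  refine and_congr_right fun hi => forall_congr' fun hin => ?_
  obtain ⟨j, rfl⟩ : ∃ j, i = j + 1 := ⟨i - 1, by omega⟩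
  have hσ := List.getElem_descentWord (l := oneLine σ) (i := j) (by simp [oneLine]; omega)
  have hτ := List.getElem_descentWord (l := oneLine τ) (i := j) (by simp [oneLine]; omega)
  have := hσ.symm.trans ((List.getElem_of_eq h _).trans hτ)
  simp only [oneLine, List.getElem_ofFn, decide_eq_decide] at this
  exact this

lemma range_oneLine_subtype {P : List ℕ → Prop} {Q : Perm (Fin n) → Prop}
    (hPQ : ∀ σ, Q σ ↔ P (oneLine σ)) :
    Set.range (fun σ : {σ // Q σ} => oneLine σ.1) = {l | l.Perm (List.range n) ∧ P l} := by
  ext l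
  constructor
  · rintro ⟨⟨σ, hσ⟩, rfl⟩
    exact ⟨(Set.ext_iff.1 range_oneLine _).1 ⟨σ, rfl⟩, (hPQ σ).1 hσ⟩
  · rintro ⟨hl, hP⟩
    obtain ⟨σ, rfl⟩ := (Set.ext_iff.1 range_oneLine l).2 hl
    exact ⟨⟨σ, (hPQ σ).2 hP⟩, rfl⟩

variable (n) in
lemma exists_avoids132_equiv_binaryTree :
    ∃ e : {σ : Perm (Fin n) // Avoids132 σ} ≃ {t : BinaryTree Unit // t.numNodes = n},
      ∀ σ, (e σ).1.inorder132 = oneLine σ.1 :=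
  exists_equiv_of_range_eq (oneLine_injective.comp Subtype.val_injective)
    (BinaryTree.inorder132_injective.comp Subtype.val_injective)
    ((range_oneLine_subtype avoids132_iff_oneLine).trans (BinaryTree.range_inorder132 n).symm)

variable (n) in
lemma exists_binaryTree_equiv_avoids231 :
    ∃ e : {t : BinaryTree Unit // t.numNodes = n} ≃ {σ : Perm (Fin n) // Avoids231 σ},
      ∀ t, oneLine (e t).1 = t.1.inorder231 :=
  exists_equiv_of_range_eq (BinaryTree.inorder231_injective.comp Subtype.val_injective)
    (oneLine_injective.comp Subtype.val_injective)
    ((BinaryTree.range_inorder231 n).trans (range_oneLine_subtype avoids231_iff_oneLine).symm)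

end Equiv.Perm

lemma bivarGF_congr {n : ℕ} {P Q : Equiv.Perm (Fin n) → Prop} (Φ : {σ // P σ} ≃ {σ // Q σ})
    (hΦ : ∀ σ, permDes n (Φ σ).1 = permDes n σ.1) : bivarGF n P = bivarGF n Q := by
  rw [bivarGF, bivarGF, Finset.sum_subtype (p := P) _ (fun σ => by simp),
    Finset.sum_subtype (p := Q) _ (fun σ => by simp)]
  exact Fintype.sum_equiv Φ _ _ fun σ => by simp [permMaj, hΦ]

/-- There is a descent-set-preserving bijection between 132-avoiding and 231-avoiding
permutations of length `n`; consequently the bivariate `(maj, des)` generating functions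
over `S_n(132)` and `S_n(231)` coincide. -/
theorem descent_preserving_bijection_132_231 (n : ℕ) :
    (∃ Φ : {σ : Equiv.Perm (Fin n) // Avoids132 σ} ≃ {σ : Equiv.Perm (Fin n) // Avoids231 σ},
        ∀ σ, permDes n (Φ σ).1 = permDes n σ.1) ∧
      bivarGF n (fun σ => Avoids132 σ) = bivarGF n (fun σ => Avoids231 σ) := by
  obtain ⟨e132, h132⟩ := Equiv.Perm.exists_avoids132_equiv_binaryTree n
  obtain ⟨e231, h231⟩ := Equiv.Perm.exists_binaryTree_equiv_avoids231 n
  have hdes : ∀ σ, permDes n (e132.trans e231 σ).1 = permDes n σ.1 := fun σ =>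
    Equiv.Perm.permDes_eq_of_descentWord_eq (by
      rw [Equiv.trans_apply, h231, ← BinaryTree.descentWord_inorder132, h132])
  exact ⟨⟨_, hdes⟩, bivarGF_congr _ hdes⟩
end

section
/- If a polynomial f(q) with nonnegative integer coefficients is such that g(q) = f(q)·(1+q+...+q^{i-1}) is symmetric (palindromic), then f(q) is symmetric. -/
open Polynomial

/-- A polynomial is palindromic (symmetric): coefficients at positions summing to
`natTrailingDegree + natDegree` agree, i.e. `f(q) = q^{n+a} f(1/q)` where `a, n` are the
lowest and highest degrees. -/
def Palindromic (p : Polynomial ℕ) : Prop :=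
  ∀ j k : ℕ, j + k = p.natTrailingDegree + p.natDegree → p.coeff j = p.coeff k

/-!
Over a semiring without zero divisors the mirror `q ^ (n + a) f(1/q)` is multiplicative, and
`1 + q + ⋯ + q^{i-1}` is its own mirror. Mirroring the palindrome `f · (1 + ⋯ + q^{i-1})` therefore
gives `mirror f · (1 + ⋯ + q^{i-1}) = f · (1 + ⋯ + q^{i-1})`, and the nonzero factor cancels in
`ℕ[X]`.
-/

namespace Polynomial

variable {R : Type*} [Semiring R]

theorem mirror_eq_self_iff (p : R[X]) :
    p.mirror = p ↔ ∀ j k, j + k = p.natTrailingDegree + p.natDegree → p.coeff j = p.coeff k := by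
  constructor
  · intro h j k hjk
    calc p.coeff j = p.mirror.coeff j := by rw [h]
      _ = p.coeff k := by
        rw [coeff_mirror, revAt_le (by omega)]
        congr 1
        omega
  · intro h
    ext n
    rw [coeff_mirror]
    rcases le_or_gt n (p.natDegree + p.natTrailingDegree) with hn | hn
    · rw [revAt_le hn]
      exact h _ _ (by omega)
    · rw [revAt_eq_self_of_lt hn]

theorem coeff_geom_sum_X (n k : ℕ) :
    (∑ i ∈ Finset.range n, (X : R[X]) ^ i).coeff k = if k < n then 1 else 0 := by
  simp [finsetSum_coeff, coeff_X_pow]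

theorem natTrailingDegree_geom_sum_X (n : ℕ) :
    (∑ i ∈ Finset.range n, (X : R[X]) ^ i).natTrailingDegree = 0 := by
  rcases Nat.eq_zero_or_pos n with rfl | hn
  · simp
  · nontriviality R
    exact natTrailingDegree_eq_zero.mpr (Or.inr (by simp [hn]))

theorem natDegree_geom_sum_X [Nontrivial R] (n : ℕ) :
    (∑ i ∈ Finset.range n, (X : R[X]) ^ i).natDegree = n - 1 := by
  rcases Nat.eq_zero_or_pos n with rfl | hn
  · simp
  · refine natDegree_eq_of_le_of_coeff_ne_zero ?_ (by simp [hn])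
    refine natDegree_le_iff_coeff_eq_zero.mpr fun k hk => ?_
    rw [coeff_geom_sum_X, if_neg (by omega)]

theorem mirror_geom_sum_X (n : ℕ) :
    (∑ i ∈ Finset.range n, (X : R[X]) ^ i).mirror = ∑ i ∈ Finset.range n, X ^ i := by
  nontriviality R
  refine (mirror_eq_self_iff _).mpr fun j k hjk => ?_
  rw [natTrailingDegree_geom_sum_X, natDegree_geom_sum_X] at hjk
  simp only [coeff_geom_sum_X]
  split_ifs <;> first | rfl | omega

end Polynomial

theorem palindromic_iff_mirror_eq_self (p : ℕ[X]) : Palindromic p ↔ p.mirror = p :=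
  (mirror_eq_self_iff p).symm

theorem palindromic_of_mul_geom_general (i : ℕ) (hi : 1 ≤ i) (f : Polynomial ℕ)
    (h : Palindromic (f * ∑ j ∈ Finset.range i, Polynomial.X ^ j)) :
    Palindromic f := by
  rw [palindromic_iff_mirror_eq_self] at h ⊢
  rw [mirror_mul_of_domain, mirror_geom_sum_X] at h
  exact mul_right_cancel₀ (monic_geom_sum_X (by omega)).ne_zero h

/-- If `f` has nonnegative integer coefficients and `f(q)·(1 + q + ⋯ + q^{i-1})` is
symmetric, then `f` is symmetric. -/
theorem palindromic_of_mul_geom (i : ℕ) (hi : 1 ≤ i) (f : Polynomial ℕ) (hf : f ≠ 0)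
    (h : Palindromic (f * ∑ j ∈ Finset.range i, Polynomial.X ^ j)) :
    Palindromic f :=
  palindromic_of_mul_geom_general i hi f h
end
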